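/- arXiv:0910.5560 — 5 statements merged into one kernel-verified Lean document; each statement's English description precedes it below -/
import Mathlib

section
/- The modular group is of divergence type at its critical exponent δ = 1: for all z, w in the hyperbolic upper half-plane ℍ, the Poincaré series ∑_{g ∈ SL(2,ℤ)} e^{−d(z, g·w)} diverges (i.e., the family (e^{−d(z,g·w)})_{g ∈ SL(2,ℤ)} is not summable). -/
/-!
Since `SL(2, ℤ)` acts by isometries, the divergence of the series does not depend on `z, w`, and
we may take `z = w = i`, where `cosh d(i, g i)` is half the sum of the squares of the entries of
`g`. For a prime `p` and a unit `u` mod `p`, the matrix `[[u, (u u⁻¹ - 1) / p], [p, u⁻¹]]` (with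
residues represented in `[0, p)`) lies in `SL(2, ℤ)` and has entries of size at most `p`, so it
contributes at least `1 / (4 p²)`. These `p - 1` matrices per prime are pairwise distinct, so the
series dominates `∑ₚ (p - 1) / (4 p²) ≥ ∑ₚ 1 / (8 p) = ∞`.
-/

open Real UpperHalfPlane Matrix
open scoped MatrixGroups

theorem Real.inv_two_mul_cosh_le_exp_neg (x : ℝ) : (2 * cosh x)⁻¹ ≤ exp (-x) := by
  rw [exp_neg]
  refine inv_anti₀ (exp_pos x) ?_
  rw [cosh_eq]
  linarith [exp_pos (-x)]

theorem summable_exp_neg_mul_dist_smul_of_summable {G X : Type*} [PseudoMetricSpace X] [SMul G X]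
    [IsIsometricSMul G X] {s : ℝ} (hs : 0 ≤ s) {x y : X}
    (h : Summable fun g : G => exp (-(s * dist x (g • y)))) (x' y' : X) :
    Summable fun g : G => exp (-(s * dist x' (g • y'))) := by
  refine .of_nonneg_of_le (fun _ => (exp_pos _).le) (fun g => ?_)
    (h.mul_left (exp (s * (dist x x' + dist y y'))))
  rw [← exp_add, exp_le_exp]
  have := dist_triangle4 x x' (g • y') (g • y)
  rw [dist_smul, dist_comm y'] at this
  nlinarith

namespace Matrix.SpecialLinearGroup

lemma det_fin_two_eq_one {R : Type*} [CommRing R] (g : SL(2, R)) :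
    g 0 0 * g 1 1 - g 0 1 * g 1 0 = 1 := by
  rw [← Matrix.det_fin_two]; exact g.det_coe

lemma sq_add_sq_bottom_row_pos (g : SL(2, ℝ)) : 0 < g 1 0 ^ 2 + g 1 1 ^ 2 := by
  have hdet := g.det_fin_two_eq_one
  by_contra! h
  have h0 : g 1 0 = 0 := by nlinarith
  have h1 : g 1 1 = 0 := by nlinarith
  simp [h0, h1] at hdet

end Matrix.SpecialLinearGroup

namespace UpperHalfPlane

instance isIsometricSMul_specialLinearGroup (R : Type*) [CommRing R] [Algebra R ℝ] :
    IsIsometricSMul SL(2, R) ℍ :=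
  ⟨fun g => isometry_smul ℍ (SpecialLinearGroup.map (algebraMap R ℝ) g)⟩

theorem coe_smul_I (g : SL(2, ℝ)) :
    ((g • I : ℍ) : ℂ) = ⟨(g 0 0 * g 1 0 + g 0 1 * g 1 1) / (g 1 0 ^ 2 + g 1 1 ^ 2),
      1 / (g 1 0 ^ 2 + g 1 1 ^ 2)⟩ := by
  have hdet := g.det_fin_two_eq_one
  have hD := g.sq_add_sq_bottom_row_pos.ne'
  have hden : (g 1 0 : ℂ) * (I : ℍ) + g 1 1 ≠ 0 := denom_ne_zero (g : GL (Fin 2) ℝ) I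
  rw [coe_specialLinearGroup_apply, Algebra.algebraMap_self, RingHom.id_apply, RingHom.id_apply,
    RingHom.id_apply, RingHom.id_apply, div_eq_iff hden]
  refine Complex.ext ?_ ?_ <;>
    simp only [coe_I, Complex.add_re, Complex.add_im, Complex.mul_re, Complex.mul_im,
      Complex.ofReal_re, Complex.ofReal_im, Complex.I_re, Complex.I_im] <;>
    field_simp
  · linear_combination -g 1 0 * hdet
  · linear_combination g 1 1 * hdet

theorem cosh_dist_I_smul (g : SL(2, ℝ)) :
    cosh (dist I (g • I)) = (g 0 0 ^ 2 + g 0 1 ^ 2 + g 1 0 ^ 2 + g 1 1 ^ 2) / 2 := by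
  have hdet := g.det_fin_two_eq_one
  have hD := g.sq_add_sq_bottom_row_pos.ne'
  have hre : (g • I).re = _ := congrArg Complex.re (coe_smul_I g)
  have him : (g • I).im = _ := congrArg Complex.im (coe_smul_I g)
  rw [cosh_dist', hre, him, I_re, I_im]
  field_simp
  linear_combination -(1 + g 0 0 * g 1 1 - g 0 1 * g 1 0) * hdet

theorem cosh_dist_I_smul_int (g : SL(2, ℤ)) :
    cosh (dist I (g • I)) = ((g 0 0 ^ 2 + g 0 1 ^ 2 + g 1 0 ^ 2 + g 1 1 ^ 2 : ℤ) : ℝ) / 2 := by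
  rw [show g • I = SpecialLinearGroup.map (Int.castRingHom ℝ) g • I from rfl, cosh_dist_I_smul]
  push_cast
  rfl

end UpperHalfPlane

namespace ModularGroup

section ofZModUnit

variable (p : ℕ) [NeZero p] (u : (ZMod p)ˣ)

lemma natCast_dvd_val_mul_val_inv_sub_one :
    (p : ℤ) ∣ (u : ZMod p).val * (↑u⁻¹ : ZMod p).val - 1 := by
  rw [← ZMod.intCast_zmod_eq_zero_iff_dvd]
  push_cast
  simp

def ofZModUnit : SL(2, ℤ) :=
  ⟨!![(u : ZMod p).val, ((u : ZMod p).val * (↑u⁻¹ : ZMod p).val - 1) / p;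
      p, (↑u⁻¹ : ZMod p).val], by
    rw [det_fin_two_of, Int.ediv_mul_cancel (natCast_dvd_val_mul_val_inv_sub_one p u)]
    ring⟩

lemma ofZModUnit_apply_zero_zero : ofZModUnit p u 0 0 = (u : ZMod p).val := rfl

lemma ofZModUnit_apply_one_zero : ofZModUnit p u 1 0 = p := rfl

lemma sq_apply_ofZModUnit_le (i j : Fin 2) : ofZModUnit p u i j ^ 2 ≤ (p : ℤ) ^ 2 := by
  have hp : (0 : ℤ) < p := by exact_mod_cast NeZero.pos p
  have ha : ((u : ZMod p).val : ℤ) < p := by exact_mod_cast ZMod.val_lt _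
  have hd : ((↑u⁻¹ : ZMod p).val : ℤ) < p := by exact_mod_cast ZMod.val_lt _
  have hb := Int.ediv_mul_cancel (natCast_dvd_val_mul_val_inv_sub_one p u)
  set a : ℤ := ((u : ZMod p).val : ℤ)
  set d : ℤ := ((↑u⁻¹ : ZMod p).val : ℤ)
  set b := (a * d - 1) / p
  have ha0 : 0 ≤ a := by positivity
  have hd0 : 0 ≤ d := by positivity
  have hbp : b < p := by nlinarith
  have hbn : -p ≤ b := by nlinarith
  fin_cases i <;> fin_cases j
  · change a ^ 2 ≤ _; nlinarith
  · change b ^ 2 ≤ _; nlinarith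
  · change (p : ℤ) ^ 2 ≤ _; rfl
  · change d ^ 2 ≤ _; nlinarith

lemma inv_four_mul_sq_le_exp_neg_dist_ofZModUnit_smul_I :
    (4 * (p : ℝ) ^ 2)⁻¹ ≤ exp (-dist I (ofZModUnit p u • I)) := by
  have hcosh : cosh (dist I (ofZModUnit p u • I)) ≤ 2 * (p : ℝ) ^ 2 := by
    have h := sq_apply_ofZModUnit_le p u
    have hsum : ofZModUnit p u 0 0 ^ 2 + ofZModUnit p u 0 1 ^ 2 + ofZModUnit p u 1 0 ^ 2 +
        ofZModUnit p u 1 1 ^ 2 ≤ 2 * (p : ℤ) ^ 2 * 2 := by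
      linarith [h 0 0, h 0 1, h 1 0, h 1 1]
    rw [cosh_dist_I_smul_int, div_le_iff₀ two_pos]
    exact_mod_cast hsum
  refine le_trans ?_ (inv_two_mul_cosh_le_exp_neg _)
  exact inv_anti₀ (by positivity) (by linarith)

end ofZModUnit

instance _root_.Nat.Primes.neZero_coe (p : Nat.Primes) : NeZero (p : ℕ) := ⟨p.prop.ne_zero⟩

lemma ofZModUnit_sigma_injective :
    Function.Injective fun x : Σ p : Nat.Primes, (ZMod p)ˣ => ofZModUnit x.1 x.2 := by
  rintro ⟨p, u⟩ ⟨q, v⟩ h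
  have hpq := congrArg (fun g : SL(2, ℤ) => g 1 0) h
  simp only [ofZModUnit_apply_one_zero, Nat.cast_inj] at hpq
  obtain rfl : p = q := Subtype.ext hpq
  have huv := congrArg (fun g : SL(2, ℤ) => g 0 0) h
  simp only [ofZModUnit_apply_zero_zero, Nat.cast_inj] at huv
  rw [Units.ext (ZMod.val_injective _ huv)]

lemma inv_le_eight_mul_sum_exp_neg_dist_ofZModUnit_smul_I (p : Nat.Primes) :
    (p : ℝ)⁻¹ ≤ 8 * ∑ u : (ZMod p)ˣ, exp (-dist I (ofZModUnit p u • I)) := by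
  have hp : (2 : ℝ) ≤ p := by exact_mod_cast p.prop.two_le
  have hsum := Finset.card_nsmul_le_sum Finset.univ _ _
    fun u _ => inv_four_mul_sq_le_exp_neg_dist_ofZModUnit_smul_I p u
  rw [Finset.card_univ, ZMod.card_units_eq_totient, Nat.totient_prime p.prop, nsmul_eq_mul,
    Nat.cast_pred p.prop.pos] at hsum
  refine le_trans ?_ (mul_le_mul_of_nonneg_left hsum (by norm_num))
  rw [inv_le_iff_one_le_mul₀ (by positivity)]
  field_simp
  nlinarith

end ModularGroup

/-- The modular group is of divergence type at its critical exponent `δ = 1`: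
for all `z, w` in the hyperbolic upper half-plane, the Poincaré series
`∑_{g ∈ SL(2,ℤ)} e^{-d(z, g w)}` diverges. -/
theorem modular_poincare_series_diverges_at_one (z w : UpperHalfPlane) :
    ¬ Summable (fun g : Matrix.SpecialLinearGroup (Fin 2) ℤ =>
      Real.exp (-(dist z (g • w)))) := by
  intro h
  have hI : Summable fun g : SL(2, ℤ) => exp (-(1 * dist I (g • I))) :=
    summable_exp_neg_mul_dist_smul_of_summable zero_le_one (by simpa using h) I I
  simp only [one_mul] at hI
  have hprimes : Summable fun p : Nat.Primes =>
      ∑ u : (ZMod p)ˣ, exp (-dist I (ModularGroup.ofZModUnit p u • I)) := by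
    simpa using (hI.comp_injective ModularGroup.ofZModUnit_sigma_injective).sigma
  refine Nat.Primes.not_summable_one_div <| (hprimes.mul_left 8).of_nonneg_of_le
    (fun p => by positivity) fun p => ?_
  simpa using ModularGroup.inv_le_eight_mul_sum_exp_neg_dist_ofZModUnit_smul_I p
end

section
/- For every real s > 1 and all z, w in the hyperbolic upper half-plane ℍ, the Poincaré series of the modular group converges: the family (e^{−s·d(z, g·w)})_{g ∈ SL(2,ℤ)} is summable. (Together with divergence at s = 1, this shows the exponent of convergence of SL(2,ℤ) equals 1.) -/
/-!
By the triangle inequality and the isometric action, `e^{-s d(z, g w)}` is bounded by a constant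
multiple of `e^{-s d(i, g i)} ≤ cosh d(i, g i) ^ (-s)`. Writing `g i = x + i y`, one has
`2 cosh d(i, g i) ≥ (1 + x²) / y`, where `y⁻¹ = c² + d²` for the bottom row `(c, d)` of `g`.
Two elements with the same bottom row differ by a translation `T ^ m`, so `g` is determined by
`(c, d)` together with `⌊x⌋`; hence the series is dominated by
`∑_{(c,d), n} ‖(c, d)‖ ^ (-2s) (1 + n²) ^ (-s)`, a product of two series converging
for `s > 1`.
-/

open Real UpperHalfPlane Matrix.SpecialLinearGroup ModularGroup
open scoped MatrixGroups

theorem dist_smul_le_dist_add_dist_smul_add {G X : Type*} [PseudoMetricSpace X] [SMul G X]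
    [IsIsometricSMul G X] (g : G) (x y z : X) :
    dist x (g • x) ≤ dist x y + dist y (g • z) + dist z x :=
  calc dist x (g • x) ≤ dist x y + dist y (g • z) + dist (g • z) (g • x) :=
        dist_triangle4 _ _ _ _
    _ = dist x y + dist y (g • z) + dist z x := by rw [dist_smul]

theorem Real.exp_neg_mul_le_cosh_rpow_neg {x s : ℝ} (hx : 0 ≤ x) (hs : 0 ≤ s) :
    exp (-(s * x)) ≤ cosh x ^ (-s) := by
  rw [rpow_neg (cosh_pos x).le, ← inv_rpow (cosh_pos x).le, mul_comm, ← neg_mul, exp_mul,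
    exp_neg]
  gcongr
  rw [cosh_eq]
  linarith [exp_le_exp.2 (by linarith : -x ≤ x)]

theorem one_add_sq_floor_le (x : ℝ) : 1 + (⌊x⌋ : ℝ) ^ 2 ≤ 3 * (1 + x ^ 2) := by
  have h₁ := Int.floor_le x
  have h₂ := Int.lt_floor_add_one x
  nlinarith [sq_nonneg ((⌊x⌋ : ℝ) - 2 * x), sq_nonneg ((⌊x⌋ : ℝ) + 1 - 2 * x)]

theorem summable_one_add_sq_rpow_neg {s : ℝ} (hs : 1 / 2 < s) :
    Summable fun n : ℤ => (1 + (n : ℝ) ^ 2) ^ (-s) := by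
  refine (summable_abs_int_rpow (b := 2 * s) (by linarith)).of_norm_bounded_eventually ?_
  filter_upwards [Filter.eventually_cofinite_ne 0] with n hn₀
  have hn : (0 : ℝ) < (n : ℝ) ^ 2 := by positivity
  have hpow : |(n : ℝ)| ^ (-(2 * s)) = ((n : ℝ) ^ 2) ^ (-s) := by
    rw [← sq_abs, ← rpow_natCast, ← rpow_mul (abs_nonneg _)]
    ring_nf
  rw [Real.norm_of_nonneg (by positivity), hpow]
  exact rpow_le_rpow_of_nonpos hn (by linarith) (by linarith)

theorem sq_norm_le_sum_sq {ι : Type*} [Fintype ι] (x : ι → ℤ) :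
    ‖x‖ ^ 2 ≤ ∑ i, (x i : ℝ) ^ 2 := by
  rw [← sq_sqrt (by positivity : 0 ≤ ∑ i, (x i : ℝ) ^ 2)]
  gcongr
  refine (pi_norm_le_iff_of_nonneg (sqrt_nonneg _)).2 fun i => ?_
  rw [Int.norm_eq_abs]
  exact abs_le_sqrt <| Finset.single_le_sum (f := fun i => (x i : ℝ) ^ 2)
    (fun _ _ => by positivity) (Finset.mem_univ i)

namespace UpperHalfPlane

instance {R : Type*} [CommRing R] [Algebra R ℝ] : IsIsometricSMul SL(2, R) ℍ :=
  ⟨fun g => isometry_smul ℍ (Matrix.SpecialLinearGroup.map (algebraMap R ℝ) g)⟩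

theorem one_add_re_sq_div_le_cosh_dist_I (w : ℍ) :
    (1 + w.re ^ 2) / (2 * w.im) ≤ cosh (dist I w) := by
  rw [cosh_dist', I_re, I_im, mul_one]
  gcongr ?_ / _
  nlinarith [sq_nonneg w.im]

end UpperHalfPlane

namespace ModularGroup

theorem inv_im_smul_I (g : SL(2, ℤ)) : (g • I).im⁻¹ = ∑ i, (g 1 i : ℝ) ^ 2 := by
  rw [im_smul_eq_div_normSq, denom_apply, I_im, one_div, inv_inv, Complex.normSq_apply]
  simp only [coe_I, Complex.add_re, Complex.mul_re, Complex.intCast_re, Complex.I_re,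
    Complex.intCast_im, Complex.I_im, Complex.add_im, Complex.mul_im, Fin.sum_univ_two]
  ring

theorem exists_eq_T_zpow_mul_of_row_one_eq {g g' : SL(2, ℤ)} (h : g' 1 = g 1) :
    ∃ m : ℤ, g' = T ^ m * g := by
  refine ⟨(g' * g⁻¹) 0 1, ?_⟩
  rw [← mul_inv_eq_iff_eq_mul]
  have h₀ : g' 1 0 = g 1 0 := congrFun h 0
  have h₁ : g' 1 1 = g 1 1 := congrFun h 1
  have hdet := g.det_coe
  have hdet' := g'.det_coe
  rw [Matrix.det_fin_two] at hdet hdet'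
  ext i j
  fin_cases i <;> fin_cases j <;>
    simp only [Fin.zero_eta, Fin.mk_one, Fin.isValue, coe_mul, coe_inv, coe_T_zpow,
      Matrix.adjugate_fin_two, Matrix.mul_apply, Matrix.of_apply, Matrix.cons_val',
      Matrix.cons_val_zero, Matrix.cons_val_one, Matrix.cons_val_fin_one, Fin.sum_univ_two] <;>
    grind

theorem injective_row_one_floor_re_smul_I :
    Function.Injective fun g : SL(2, ℤ) => (g 1, ⌊(g • I).re⌋) := by
  intro g g' h
  obtain ⟨hrow, hfloor⟩ := Prod.mk.inj h
  obtain ⟨m, rfl⟩ := exists_eq_T_zpow_mul_of_row_one_eq hrow.symm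
  rw [mul_smul, re_T_zpow_smul, Int.floor_add_intCast] at hfloor
  obtain rfl : m = 0 := by omega
  simp

theorem exp_neg_mul_dist_I_smul_I_le (g : SL(2, ℤ)) {s : ℝ} (hs : 0 ≤ s) :
    exp (-(s * dist I (g • I))) ≤
      6 ^ s * (‖g 1‖ ^ (-(2 * s)) * (1 + (⌊(g • I).re⌋ : ℝ) ^ 2) ^ (-s)) := by
  set w := g • I
  set n := ⌊w.re⌋
  have hcosh : ‖g 1‖ ^ 2 * (1 + (n : ℝ) ^ 2) / 6 ≤ cosh (dist I w) :=
    calc ‖g 1‖ ^ 2 * (1 + (n : ℝ) ^ 2) / 6 ≤ w.im⁻¹ * (3 * (1 + w.re ^ 2)) / 6 := by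
          rw [inv_im_smul_I]
          gcongr
          exacts [sq_norm_le_sum_sq _, one_add_sq_floor_le _]
      _ = (1 + w.re ^ 2) / (2 * w.im) := by
          field_simp
          ring
      _ ≤ cosh (dist I w) := one_add_re_sq_div_le_cosh_dist_I w
  have hrow : 0 < ‖g 1‖ := norm_pos_iff.2 (g.row_ne_zero 1)
  calc exp (-(s * dist I w)) ≤ cosh (dist I w) ^ (-s) :=
        exp_neg_mul_le_cosh_rpow_neg dist_nonneg hs
    _ ≤ (‖g 1‖ ^ 2 * (1 + (n : ℝ) ^ 2) / 6) ^ (-s) :=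
        rpow_le_rpow_of_nonpos (by positivity) hcosh (by linarith)
    _ = 6 ^ s * (‖g 1‖ ^ (-(2 * s)) * (1 + (n : ℝ) ^ 2) ^ (-s)) := by
        rw [div_rpow (by positivity) (by norm_num), mul_rpow (by positivity) (by positivity),
          ← rpow_natCast, ← rpow_mul hrow.le, rpow_neg (by norm_num : (0 : ℝ) ≤ 6),
          div_inv_eq_mul]
        push_cast
        ring_nf

theorem summable_exp_neg_mul_dist_I_smul_I {s : ℝ} (hs : 1 < s) :
    Summable fun g : SL(2, ℤ) => exp (-(s * dist I (g • I))) := by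
  have hdom : Summable fun p : (Fin 2 → ℤ) × ℤ =>
      ‖p.1‖ ^ (-(2 * s)) * (1 + (p.2 : ℝ) ^ 2) ^ (-s) :=
    (EisensteinSeries.summable_one_div_norm_rpow (by linarith)).mul_of_nonneg
      (summable_one_add_sq_rpow_neg (by linarith)) (fun _ => by positivity) fun _ => by positivity
  exact ((hdom.comp_injective injective_row_one_floor_re_smul_I).mul_left (6 ^ s)).of_nonneg_of_le
    (fun _ => (exp_pos _).le) fun g => exp_neg_mul_dist_I_smul_I_le g (by linarith)

end ModularGroup

/-- For every real `s > 1` and all `z, w` in the hyperbolic upper half-plane,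
the Poincaré series of the modular group converges: the family
`(e^{-s d(z, g w)})_{g ∈ SL(2,ℤ)}` is summable. -/
theorem modular_poincare_series_summable_of_one_lt (s : ℝ) (hs : 1 < s)
    (z w : UpperHalfPlane) :
    Summable (fun g : Matrix.SpecialLinearGroup (Fin 2) ℤ =>
      Real.exp (-(s * dist z (g • w)))) := by
  refine ((summable_exp_neg_mul_dist_I_smul_I hs).mul_left
    (exp (s * (dist I z + dist w I)))).of_nonneg_of_le (fun _ => (exp_pos _).le) fun g => ?_
  rw [← exp_add, exp_le_exp]
  have htri := dist_smul_le_dist_add_dist_smul_add g I z w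
  nlinarith
end

section
/- The Farey map F is conservative and ergodic with respect to the F-invariant σ-finite measure μ with density 1/x on (0,1], and μ is an infinite measure (μ((0,1]) = ∞). (This is the instance, for the modular group, of the proposition that T is conservative and ergodic with respect to μ_δ, and that μ_δ is infinite if and only if δ ≤ (r_max+1)/2; here δ = 1 = (r_max+1)/2.) -/
/-!
Invariance of `dx/x` is the identity `1/(y(1+y)) + 1/(1+y) = 1/y`: the two inverse branches
`y/(1+y)` and `1/(1+y)` of the Farey map both have Jacobian `1/(1+y)²`. The measure is infinite
because `∫₀¹ dx/x = ∞`.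

Conservativity and ergodicity both follow once every Lebesgue-positive set `s ⊆ [0,1]` is shown
to reach every Lebesgue-positive set `t ⊆ [0,1]` under some iterate. Take an irrational density
point `a` of `s`. The inverse branch of `Fⁿ` that sends `Fⁿ a` back to `a` is a Möbius map
`x ↦ (px + p')/(qx + q')` with nonnegative entries and determinant `±1`. It maps `[0,1]` into the
ball of radius `1/q'²` about `a`, and it shrinks lengths by a factor of at most `(q+q')²`. Just
after the orbit of `a` visits `(1/2,1]` we have `q ≤ q'`, so the image of `t` fills a fixed
proportion of that ball. The orbit visits `(1/2,1]` infinitely often and `q'` grows, so for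
large `n` this proportion beats the density of `sᶜ` at `a`. Hence the image of `t` meets `s`.
-/

open MeasureTheory

/-- The Farey map on `[0,1]`: `F(x) = x/(1-x)` for `x ≤ 1/2` and
`F(x) = (1-x)/x` for `x > 1/2`. -/
noncomputable def fareyMap (x : ℝ) : ℝ :=
  if x ≤ 1 / 2 then x / (1 - x) else (1 - x) / x

/-- The σ-finite measure on `(0,1]` with density `1/x` with respect to
Lebesgue measure. -/
noncomputable def fareyMeasure : Measure ℝ :=
  (volume.withDensity fun x => ENNReal.ofReal x⁻¹).restrict (Set.Ioc 0 1)

open Set Filter Metric Topology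
open scoped ENNReal

section Transitive

variable {α : Type*} [MeasurableSpace α]

def IsMeasureTransitive (f : α → α) (μ : Measure α) : Prop :=
  ∀ ⦃s t : Set α⦄, MeasurableSet s → MeasurableSet t → μ s ≠ 0 → μ t ≠ 0 →
    ∃ x ∈ s, ∃ n ≠ 0, f^[n] x ∈ t

variable {f : α → α} {μ ν : Measure α}

theorem IsMeasureTransitive.mono_ac (h : IsMeasureTransitive f ν) (hμν : μ ≪ ν) :
    IsMeasureTransitive f μ :=
  fun _ _ hs ht hs0 ht0 => h hs ht (mt (@hμν _) hs0) (mt (@hμν _) ht0)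

theorem IsMeasureTransitive.conservative (h : IsMeasureTransitive f μ)
    (hf : Measure.QuasiMeasurePreserving f μ μ) : Conservative f μ :=
  ⟨hf, fun _ hs hs0 => h hs hs hs0 hs0⟩

theorem IsMeasureTransitive.preErgodic (h : IsMeasureTransitive f μ) : PreErgodic f μ := by
  refine ⟨fun s hs hinv => eventuallyConst_set'.2 ?_⟩
  rw [ae_eq_empty, ae_eq_univ]
  by_contra! hpos
  obtain ⟨x, hx, n, -, hxn⟩ := h hs hs.compl hpos.1 hpos.2
  have hinv_n : f^[n] ⁻¹' s = s := by
    rw [preimage_iterate_eq]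
    exact Function.iterate_fixed hinv n
  exact hxn (show x ∈ f^[n] ⁻¹' s by rwa [hinv_n])

end Transitive

theorem ae_eventually_measure_closedBall_diff_lt {α : Type*} [MetricSpace α] [ProperSpace α]
    [MeasurableSpace α] [BorelSpace α] [HasBesicovitchCovering α]
    (μ : Measure α) [IsLocallyFiniteMeasure μ] [μ.IsOpenPosMeasure]
    {s : Set α} (hs : MeasurableSet s) {ε : ℝ≥0∞} (hε : ε ≠ 0) :
    ∀ᵐ a ∂μ, a ∈ s → ∀ᶠ r in 𝓝[>] 0, μ (closedBall a r \ s) < ε * μ (closedBall a r) := by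
  filter_upwards [Besicovitch.ae_tendsto_measure_inter_div_of_measurableSet μ hs.compl]
    with a ha has
  have hlim :
      Tendsto (fun r => μ (sᶜ ∩ closedBall a r) / μ (closedBall a r)) (𝓝[>] 0) (𝓝 0) := by
    simpa [has] using ha
  filter_upwards [hlim (gt_mem_nhds hε.bot_lt), self_mem_nhdsWithin] with r hr (hr0 : 0 < r)
  rw [sdiff_eq, inter_comm]
  exact (ENNReal.div_lt_iff (Or.inl (measure_closedBall_pos μ a hr0).ne')
    (Or.inl measure_closedBall_lt_top.ne)).1 hr

noncomputable def mobius (A : Matrix (Fin 2) (Fin 2) ℝ) (x : ℝ) : ℝ :=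
  (A 0 0 * x + A 0 1) / (A 1 0 * x + A 1 1)

theorem mobius_one (x : ℝ) : mobius 1 x = x := by
  simp [mobius]

@[fun_prop]
theorem measurable_mobius (A : Matrix (Fin 2) (Fin 2) ℝ) : Measurable (mobius A) := by
  unfold mobius
  fun_prop

theorem mobius_mul {A B : Matrix (Fin 2) (Fin 2) ℝ} {x : ℝ} (hx : B 1 0 * x + B 1 1 ≠ 0) :
    mobius (A * B) x = mobius A (mobius B x) := by
  simp only [mobius, Matrix.mul_apply, Fin.sum_univ_two]
  rw [← div_div_div_cancel_right₀ hx]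
  congr 1 <;> field_simp <;> ring

theorem mobius_sub_mobius {A : Matrix (Fin 2) (Fin 2) ℝ} {x y : ℝ}
    (hx : A 1 0 * x + A 1 1 ≠ 0) (hy : A 1 0 * y + A 1 1 ≠ 0) :
    mobius A x - mobius A y =
      A.det * (x - y) / ((A 1 0 * x + A 1 1) * (A 1 0 * y + A 1 1)) := by
  rw [mobius, mobius, div_sub_div _ _ hx hy, Matrix.det_fin_two]
  ring_nf

theorem hasDerivAt_mobius {A : Matrix (Fin 2) (Fin 2) ℝ} {x : ℝ} (hx : A 1 0 * x + A 1 1 ≠ 0) :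
    HasDerivAt (mobius A) (A.det / (A 1 0 * x + A 1 1) ^ 2) x := by
  have hnum := ((hasDerivAt_id x).const_mul (A 0 0)).add_const (A 0 1)
  have hden := ((hasDerivAt_id x).const_mul (A 1 0)).add_const (A 1 1)
  exact (hnum.div hden hx).congr_deriv (by rw [Matrix.det_fin_two]; simp only [id]; ring)

/-- The shape of the matrices `!![p, p'; q, q']` of the inverse branches of the iterates of the
Farey map (the convergent matrices of continued fractions). -/
structure IsBranchMatrix (A : Matrix (Fin 2) (Fin 2) ℝ) : Prop where
  nonneg : ∀ i j, 0 ≤ A i j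
  one_le : 1 ≤ A 1 1
  abs_det : |A.det| = 1

namespace IsBranchMatrix

variable {A B : Matrix (Fin 2) (Fin 2) ℝ}

theorem mul (hA : IsBranchMatrix A) (hB : IsBranchMatrix B) : IsBranchMatrix (A * B) := by
  refine ⟨fun i j => ?_, ?_, by rw [Matrix.det_mul, abs_mul, hA.abs_det, hB.abs_det, one_mul]⟩
  · simp only [Matrix.mul_apply, Fin.sum_univ_two]
    exact add_nonneg (mul_nonneg (hA.nonneg i 0) (hB.nonneg 0 j))
      (mul_nonneg (hA.nonneg i 1) (hB.nonneg 1 j))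
  · simp only [Matrix.mul_apply, Fin.sum_univ_two]
    nlinarith [hA.nonneg 1 0, hB.nonneg 0 1, hA.one_le, hB.one_le]

theorem denom_pos (hA : IsBranchMatrix A) {x : ℝ} (hx : 0 ≤ x) : 0 < A 1 0 * x + A 1 1 := by
  nlinarith [hA.nonneg 1 0, hA.one_le]

theorem abs_mobius_sub_mobius (hA : IsBranchMatrix A) {x y : ℝ} (hx : 0 ≤ x) (hy : 0 ≤ y) :
    |mobius A x - mobius A y| = |x - y| / ((A 1 0 * x + A 1 1) * (A 1 0 * y + A 1 1)) := by
  have hdx := hA.denom_pos hx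
  have hdy := hA.denom_pos hy
  rw [mobius_sub_mobius hdx.ne' hdy.ne', abs_div, abs_mul, hA.abs_det, one_mul,
    abs_of_pos (mul_pos hdx hdy)]

theorem injOn (hA : IsBranchMatrix A) : InjOn (mobius A) (Ici 0) := by
  intro x hx y hy hxy
  have h := hA.abs_mobius_sub_mobius hx hy
  rw [hxy, sub_self, abs_zero, eq_comm,
    div_eq_zero_iff, or_iff_left (mul_pos (hA.denom_pos hx) (hA.denom_pos hy)).ne'] at h
  exact sub_eq_zero.1 (abs_eq_zero.1 h)

theorem dist_mobius_le (hA : IsBranchMatrix A) {x y : ℝ} (hx : x ∈ Icc 0 1) (hy : y ∈ Icc 0 1) :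
    dist (mobius A x) (mobius A y) ≤ (A 1 1 ^ 2)⁻¹ := by
  have hA11 : 0 < A 1 1 := one_pos.trans_le hA.one_le
  have hdx : A 1 1 ≤ A 1 0 * x + A 1 1 := le_add_of_nonneg_left (mul_nonneg (hA.nonneg 1 0) hx.1)
  have hdy : A 1 1 ≤ A 1 0 * y + A 1 1 := le_add_of_nonneg_left (mul_nonneg (hA.nonneg 1 0) hy.1)
  rw [Real.dist_eq, hA.abs_mobius_sub_mobius hx.1 hy.1, ← one_div, sq]
  refine div_le_div₀ zero_le_one ?_ (by positivity) (mul_le_mul hdx hdy hA11.le (by linarith))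
  rw [abs_sub_le_iff]
  constructor <;> linarith [hx.1, hx.2, hy.1, hy.2]

theorem lintegral_image_mobius (hA : IsBranchMatrix A) {t : Set ℝ} (ht : MeasurableSet t)
    (ht0 : t ⊆ Ici 0) (g : ℝ → ℝ≥0∞) :
    ∫⁻ x in mobius A '' t, g x =
      ∫⁻ y in t, ENNReal.ofReal (((A 1 0 * y + A 1 1) ^ 2)⁻¹) * g (mobius A y) := by
  have hderiv : ∀ y ∈ t, HasDerivWithinAt (mobius A) (A.det / (A 1 0 * y + A 1 1) ^ 2) t y :=
    fun y hy => (hasDerivAt_mobius (hA.denom_pos (ht0 hy)).ne').hasDerivWithinAt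
  rw [lintegral_image_eq_lintegral_abs_deriv_mul ht hderiv (hA.injOn.mono ht0)]
  refine setLIntegral_congr_fun ht fun y hy => ?_
  rw [abs_div, hA.abs_det, abs_of_pos (pow_pos (hA.denom_pos (ht0 hy)) 2), one_div]

theorem le_volume_image_mobius (hA : IsBranchMatrix A) {t : Set ℝ} (ht : MeasurableSet t)
    (htI : t ⊆ Icc 0 1) :
    ENNReal.ofReal (((A 1 0 + A 1 1) ^ 2)⁻¹) * volume t ≤ volume (mobius A '' t) := by
  rw [← setLIntegral_one (mobius A '' t), hA.lintegral_image_mobius ht fun x hx => (htI hx).1,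
    ← setLIntegral_const]
  refine setLIntegral_mono' ht fun x hx => ?_
  have hdx := hA.denom_pos (htI hx).1
  rw [mul_one]
  gcongr
  nlinarith [hA.nonneg 1 0, (htI hx).2]

end IsBranchMatrix

noncomputable def fareyInverse (x : ℝ) : Matrix (Fin 2) (Fin 2) ℝ :=
  if x ≤ 1 / 2 then !![1, 0; 1, 1] else !![0, 1; 1, 1]

theorem isBranchMatrix_fareyInverse (x : ℝ) : IsBranchMatrix (fareyInverse x) := by
  unfold fareyInverse
  split_ifs <;> exact ⟨by simp [Fin.forall_fin_two], by simp, by simp [Matrix.det_fin_two]⟩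

theorem fareyInverse_denom (x y : ℝ) : fareyInverse x 1 0 * y + fareyInverse x 1 1 = 1 + y := by
  unfold fareyInverse
  split_ifs <;> simp [add_comm]

theorem mobius_fareyInverse_of_le {x : ℝ} (hx : x ≤ 1 / 2) (y : ℝ) :
    mobius (fareyInverse x) y = y / (1 + y) := by
  rw [fareyInverse, if_pos hx, mobius]
  simp [add_comm]

theorem mobius_fareyInverse_of_lt {x : ℝ} (hx : 1 / 2 < x) (y : ℝ) :
    mobius (fareyInverse x) y = 1 / (1 + y) := by
  rw [fareyInverse, if_neg hx.not_ge, mobius]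
  simp [add_comm]

theorem fareyMap_of_le {x : ℝ} (hx : x ≤ 1 / 2) : fareyMap x = x / (1 - x) := if_pos hx

theorem fareyMap_of_lt {x : ℝ} (hx : 1 / 2 < x) : fareyMap x = (1 - x) / x := if_neg hx.not_ge

theorem mobius_fareyInverse_fareyMap (x : ℝ) : mobius (fareyInverse x) (fareyMap x) = x := by
  rcases le_or_gt x (1 / 2) with hx | hx
  · have : 1 - x ≠ 0 := by linarith
    rw [mobius_fareyInverse_of_le hx, fareyMap_of_le hx]
    field_simp
    ring
  · have : x ≠ 0 := by linarith
    rw [mobius_fareyInverse_of_lt hx, fareyMap_of_lt hx]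
    field_simp
    ring

theorem fareyMap_mobius_fareyInverse (x : ℝ) {y : ℝ} (hy : y ∈ Icc 0 1) :
    fareyMap (mobius (fareyInverse x) y) = y := by
  obtain ⟨hy0, hy1⟩ := hy
  have hy' : 1 + y ≠ 0 := by linarith
  rcases le_or_gt x (1 / 2) with hx | hx
  · rw [mobius_fareyInverse_of_le hx, fareyMap_of_le]
    · field_simp
      ring
    · rw [div_le_div_iff₀ (by linarith) two_pos]
      linarith
  · rw [mobius_fareyInverse_of_lt hx]
    rcases hy1.eq_or_lt with rfl | hy1
    · norm_num [fareyMap]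
    · rw [fareyMap_of_lt]
      · field_simp
        ring
      · rw [div_lt_div_iff₀ two_pos (by linarith)]
        linarith

theorem mobius_fareyInverse_mem_Icc (x : ℝ) {y : ℝ} (hy : y ∈ Icc 0 1) :
    mobius (fareyInverse x) y ∈ Icc 0 1 := by
  obtain ⟨hy0, hy1⟩ := hy
  rcases le_or_gt x (1 / 2) with hx | hx
  · rw [mobius_fareyInverse_of_le hx]
    exact ⟨by positivity, (div_le_one (by linarith)).2 (by linarith)⟩
  · rw [mobius_fareyInverse_of_lt hx]
    exact ⟨by positivity, (div_le_one (by linarith)).2 (by linarith)⟩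

theorem mapsTo_fareyMap_Icc : MapsTo fareyMap (Icc 0 1) (Icc 0 1) := by
  rintro x ⟨hx0, hx1⟩
  rcases le_or_gt x (1 / 2) with hx | hx
  · rw [fareyMap_of_le hx]
    exact ⟨div_nonneg hx0 (by linarith), (div_le_one (by linarith)).2 (by linarith)⟩
  · rw [fareyMap_of_lt hx]
    exact ⟨div_nonneg (by linarith) (by linarith), (div_le_one (by linarith)).2 (by linarith)⟩

theorem Irrational.fareyMap {x : ℝ} (h : Irrational x) : Irrational (fareyMap x) := by
  rintro ⟨q, hq⟩
  have hx := mobius_fareyInverse_fareyMap x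
  rw [← hq] at hx
  rcases le_or_gt x (1 / 2) with hle | hlt
  · rw [mobius_fareyInverse_of_le hle] at hx
    exact h ⟨q / (1 + q), by rw [← hx]; push_cast; rfl⟩
  · rw [mobius_fareyInverse_of_lt hlt] at hx
    exact h ⟨1 / (1 + q), by rw [← hx]; push_cast; rfl⟩

theorem Irrational.iterate_fareyMap {x : ℝ} (h : Irrational x) (n : ℕ) :
    Irrational (_root_.fareyMap^[n] x) :=
  MapsTo.iterate (s := {x | Irrational x}) (fun _ hx => hx.fareyMap) n h

/-- `mobius (fareyBranch a n)` is the inverse branch of `fareyMap^[n]` that sends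
`fareyMap^[n] a` back to `a`. -/
noncomputable def fareyBranch (a : ℝ) : ℕ → Matrix (Fin 2) (Fin 2) ℝ
  | 0 => 1
  | n + 1 => fareyBranch a n * fareyInverse (fareyMap^[n] a)

theorem isBranchMatrix_fareyBranch (a : ℝ) (n : ℕ) : IsBranchMatrix (fareyBranch a n) := by
  induction n with
  | zero => exact ⟨by simp [Fin.forall_fin_two, fareyBranch], by simp [fareyBranch],
      by simp [fareyBranch]⟩
  | succ n ih => exact ih.mul (isBranchMatrix_fareyInverse _)

theorem iterate_fareyMap_mobius_fareyBranch (a : ℝ) (n : ℕ) {y : ℝ} (hy : y ∈ Icc 0 1) :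
    fareyMap^[n] (mobius (fareyBranch a n) y) = y := by
  induction n generalizing y with
  | zero => simp [fareyBranch, mobius_one]
  | succ n ih =>
    rw [fareyBranch, mobius_mul ((isBranchMatrix_fareyInverse _).denom_pos hy.1).ne',
      Function.iterate_succ_apply', ih (mobius_fareyInverse_mem_Icc _ hy),
      fareyMap_mobius_fareyInverse _ hy]

theorem mobius_fareyBranch_iterate_fareyMap {a : ℝ} (ha : a ∈ Icc 0 1) (n : ℕ) :
    mobius (fareyBranch a n) (fareyMap^[n] a) = a := by
  induction n with
  | zero => simp [fareyBranch, mobius_one]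
  | succ n ih =>
    have hmem := mapsTo_fareyMap_Icc.iterate (n + 1) ha
    rw [fareyBranch, mobius_mul ((isBranchMatrix_fareyInverse _).denom_pos hmem.1).ne',
      Function.iterate_succ_apply', mobius_fareyInverse_fareyMap, ih]

theorem add_one_le_fareyBranch (a : ℝ) (n : ℕ) :
    (n : ℝ) + 1 ≤ fareyBranch a n 1 0 + fareyBranch a n 1 1 := by
  induction n with
  | zero => simp [fareyBranch]
  | succ n ih =>
    have h11 := (isBranchMatrix_fareyBranch a n).one_le
    simp only [fareyBranch, Matrix.mul_apply, Fin.sum_univ_two, fareyInverse]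
    split_ifs <;> simp <;> linarith

theorem fareyBranch_succ_of_half_lt {a : ℝ} {n : ℕ} (h : 1 / 2 < fareyMap^[n] a) :
    fareyBranch a (n + 1) 1 0 = fareyBranch a n 1 1 ∧
      fareyBranch a (n + 1) 1 1 = fareyBranch a n 1 0 + fareyBranch a n 1 1 := by
  simp only [fareyBranch, fareyInverse, if_neg h.not_ge, Matrix.mul_apply, Fin.sum_univ_two]
  simp

theorem inv_fareyMap_of_le {x : ℝ} (h0 : x ≠ 0) (h : x ≤ 1 / 2) : (fareyMap x)⁻¹ = x⁻¹ - 1 := by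
  rw [fareyMap_of_le h, inv_div, sub_div, div_self h0, one_div]

theorem exists_half_lt_iterate_fareyMap {a : ℝ} (ha : a ∈ Icc 0 1) (hirr : Irrational a)
    (N : ℕ) :
    ∃ m ≥ N, 1 / 2 < fareyMap^[m] a := by
  by_contra! hle
  have hinv : ∀ k : ℕ, (fareyMap^[N + k] a)⁻¹ = (fareyMap^[N] a)⁻¹ - k := by
    intro k
    induction k with
    | zero => simp
    | succ k ih =>
      rw [← add_assoc, Function.iterate_succ_apply',
        inv_fareyMap_of_le (hirr.iterate_fareyMap _).ne_zero (hle _ (by omega)), ih]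
      push_cast
      ring
  have hpos : 0 < (fareyMap^[N + ⌈(fareyMap^[N] a)⁻¹⌉₊] a)⁻¹ :=
    inv_pos.2 <| ((mapsTo_fareyMap_Icc.iterate _ ha).1).lt_of_ne
      (hirr.iterate_fareyMap _).ne_zero.symm
  rw [hinv] at hpos
  linarith [Nat.le_ceil (fareyMap^[N] a)⁻¹]

/-- The first inequality bounds the distortion of `mobius (fareyBranch a n)` on `[0,1]` by `4`,
the second one the diameter of its image. -/
theorem exists_fareyBranch_le_and_inv_sq_lt {a : ℝ} (ha : a ∈ Icc 0 1) (hirr : Irrational a)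
    {δ : ℝ} (hδ : 0 < δ) :
    ∃ n ≠ 0, fareyBranch a n 1 0 ≤ fareyBranch a n 1 1 ∧ (fareyBranch a n 1 1 ^ 2)⁻¹ < δ := by
  obtain ⟨N, hN⟩ := exists_nat_gt δ⁻¹
  obtain ⟨m, hmN, hm⟩ := exists_half_lt_iterate_fareyMap ha hirr N
  obtain ⟨h10, h11⟩ := fareyBranch_succ_of_half_lt hm
  have hq := (isBranchMatrix_fareyBranch a m).nonneg 1 0
  have hsum := add_one_le_fareyBranch a m
  refine ⟨m + 1, m.succ_ne_zero, by rw [h10, h11]; linarith, ?_⟩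
  have hNm : (N : ℝ) ≤ m := by exact_mod_cast hmN
  have hq' : δ⁻¹ < fareyBranch a (m + 1) 1 1 := by rw [h11]; linarith
  rw [inv_lt_comm₀ (pow_pos (by linarith) 2) hδ]
  nlinarith

theorem exists_iterate_fareyMap_mem {s t : Set ℝ} (hs : MeasurableSet s) (ht : MeasurableSet t)
    (hsI : s ⊆ Icc 0 1) (htI : t ⊆ Icc 0 1) (hs0 : volume s ≠ 0) (ht0 : volume t ≠ 0) :
    ∃ x ∈ s, ∃ n ≠ 0, fareyMap^[n] x ∈ t := by
  -- a branch with `A 1 0 ≤ A 1 1` maps `t` onto a set of measure at least `volume t / (2 A 1 1)²`,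
  -- which is `ε` times the measure `2 / (A 1 1)²` of the ball containing it
  set ε := ENNReal.ofReal (1 / 8) * volume t
  have hε : ε ≠ 0 := mul_ne_zero (by simp) ht0
  have hirr : ∀ᵐ x, Irrational x := (countable_range ((↑) : ℚ → ℝ)).ae_notMem volume
  have : (ae (volume.restrict s)).NeBot := ae_restrict_neBot.2 hs0
  obtain ⟨a, has, hdens, hirr_a⟩ := ((ae_restrict_mem hs).and (ae_restrict_of_ae
    ((ae_eventually_measure_closedBall_diff_lt volume hs hε).and hirr))).exists
  obtain ⟨δ, hδ0, hδ⟩ := (nhdsGT_basis (0 : ℝ)).eventually_iff.mp (hdens has)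
  obtain ⟨n, hn0, hq, hr⟩ := exists_fareyBranch_le_and_inv_sq_lt (hsI has) hirr_a hδ0
  set A := fareyBranch a n
  have hA : IsBranchMatrix A := isBranchMatrix_fareyBranch a n
  have hA11 : 1 ≤ A 1 1 := hA.one_le
  set r := (A 1 1 ^ 2)⁻¹
  by_contra! hcon
  have himage : mobius A '' t ⊆ closedBall a r \ s := by
    rintro _ ⟨y, hy, rfl⟩
    refine ⟨?_, fun hys => hcon _ hys n hn0 ?_⟩
    · rw [mem_closedBall, ← mobius_fareyBranch_iterate_fareyMap (hsI has) n]
      exact hA.dist_mobius_le (htI hy) (mapsTo_fareyMap_Icc.iterate n (hsI has))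
    · rwa [iterate_fareyMap_mobius_fareyBranch a n (htI hy)]
  have hlower : ε * volume (closedBall a r) ≤ volume (mobius A '' t) :=
    calc ε * volume (closedBall a r) = ENNReal.ofReal (((2 * A 1 1) ^ 2)⁻¹) * volume t := by
          rw [Real.volume_closedBall, mul_right_comm, ← ENNReal.ofReal_mul (by norm_num)]
          congr 2
          ring
      _ ≤ ENNReal.ofReal (((A 1 0 + A 1 1) ^ 2)⁻¹) * volume t := by
          gcongr <;> nlinarith [hA.nonneg 1 0]
      _ ≤ volume (mobius A '' t) := hA.le_volume_image_mobius ht htI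
  exact (hlower.trans (measure_mono himage)).not_gt (hδ ⟨by positivity, hr⟩)

theorem isMeasureTransitive_fareyMap :
    IsMeasureTransitive fareyMap (volume.restrict (Icc 0 1)) := by
  intro s t hs ht hs0 ht0
  rw [Measure.restrict_apply hs] at hs0
  rw [Measure.restrict_apply ht] at ht0
  obtain ⟨x, hx, n, hn, hxn⟩ := exists_iterate_fareyMap_mem (hs.inter measurableSet_Icc)
    (ht.inter measurableSet_Icc) inter_subset_right inter_subset_right hs0 ht0
  exact ⟨x, hx.1, n, hn, hxn.1⟩

theorem fareyMeasure_absolutelyContinuous : fareyMeasure ≪ volume.restrict (Icc 0 1) :=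
  ((withDensity_absolutelyContinuous _ _).restrict _).trans
    (Measure.absolutelyContinuous_of_le (Measure.restrict_mono Ioc_subset_Icc_self le_rfl))

theorem fareyMeasure_apply {s : Set ℝ} (hs : MeasurableSet s) :
    fareyMeasure s = ∫⁻ x in s ∩ Ioc 0 1, ENNReal.ofReal x⁻¹ := by
  rw [fareyMeasure, Measure.restrict_apply hs, withDensity_apply _ (hs.inter measurableSet_Ioc)]

theorem measurable_fareyMap : Measurable fareyMap := by
  unfold fareyMap
  exact Measurable.ite measurableSet_Iic (by fun_prop) (by fun_prop)

theorem image_mobius_fareyInverse_zero (S : Set ℝ) :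
    mobius (fareyInverse 0) '' (S ∩ Ioc 0 1) = fareyMap ⁻¹' S ∩ Ioc 0 (1 / 2) := by
  ext x
  constructor
  · rintro ⟨y, ⟨hyS, hy0, hy1⟩, rfl⟩
    refine ⟨by rwa [mem_preimage, fareyMap_mobius_fareyInverse _ ⟨hy0.le, hy1⟩], ?_⟩
    rw [mobius_fareyInverse_of_le (by norm_num)]
    refine ⟨by positivity, ?_⟩
    rw [div_le_div_iff₀ (by linarith) two_pos]
    linarith
  · rintro ⟨hxS, hx0, hx1⟩
    have hx1' : 1 - x ≠ 0 := by linarith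
    refine ⟨fareyMap x, ⟨hxS, ?_⟩, ?_⟩
    · rw [fareyMap_of_le hx1]
      exact ⟨div_pos hx0 (by linarith), (div_le_one (by linarith)).2 (by linarith)⟩
    · rw [mobius_fareyInverse_of_le (by norm_num), ← mobius_fareyInverse_of_le hx1,
        mobius_fareyInverse_fareyMap]

theorem image_mobius_fareyInverse_one (S : Set ℝ) :
    mobius (fareyInverse 1) '' (S ∩ Ico 0 1) = fareyMap ⁻¹' S ∩ Ioc (1 / 2) 1 := by
  ext x
  constructor
  · rintro ⟨y, ⟨hyS, hy0, hy1⟩, rfl⟩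
    refine ⟨by rwa [mem_preimage, fareyMap_mobius_fareyInverse _ ⟨hy0, hy1.le⟩], ?_⟩
    rw [mobius_fareyInverse_of_lt (by norm_num)]
    refine ⟨?_, (div_le_one (by linarith)).2 (by linarith)⟩
    rw [div_lt_div_iff₀ two_pos (by linarith)]
    linarith
  · rintro ⟨hxS, hx0, hx1⟩
    refine ⟨fareyMap x, ⟨hxS, ?_⟩, ?_⟩
    · rw [fareyMap_of_lt hx0]
      exact ⟨div_nonneg (by linarith) (by linarith),
        (div_lt_one (by linarith)).2 (by linarith)⟩
    · rw [mobius_fareyInverse_of_lt (by norm_num), ← mobius_fareyInverse_of_lt hx0,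
        mobius_fareyInverse_fareyMap]

theorem preimage_fareyMap_inter_Ioc (S : Set ℝ) :
    fareyMap ⁻¹' S ∩ Ioc 0 1 =
      mobius (fareyInverse 0) '' (S ∩ Ioc 0 1) ∪ mobius (fareyInverse 1) '' (S ∩ Ico 0 1) := by
  rw [image_mobius_fareyInverse_zero, image_mobius_fareyInverse_one, ← inter_union_distrib_left,
    Ioc_union_Ioc_eq_Ioc (by norm_num) (by norm_num)]

theorem measurePreserving_fareyMap : MeasurePreserving fareyMap fareyMeasure fareyMeasure := by
  refine ⟨measurable_fareyMap, Measure.ext fun S hS => ?_⟩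
  have hS₀ : MeasurableSet (S ∩ Ioc 0 1) := hS.inter measurableSet_Ioc
  have hS₁ : MeasurableSet (S ∩ Ico 0 1) := hS.inter measurableSet_Ico
  have hmeas : MeasurableSet (mobius (fareyInverse 1) '' (S ∩ Ico 0 1)) := by
    rw [image_mobius_fareyInverse_one]
    exact (measurable_fareyMap hS).inter measurableSet_Ioc
  have hdisj : Disjoint (mobius (fareyInverse 0) '' (S ∩ Ioc 0 1))
      (mobius (fareyInverse 1) '' (S ∩ Ico 0 1)) := by
    rw [image_mobius_fareyInverse_zero, image_mobius_fareyInverse_one]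
    exact disjoint_of_subset inter_subset_right inter_subset_right (Ioc_disjoint_Ioc_of_le le_rfl)
  rw [Measure.map_apply measurable_fareyMap hS, fareyMeasure_apply (measurable_fareyMap hS),
    fareyMeasure_apply hS, preimage_fareyMap_inter_Ioc, lintegral_union hmeas hdisj,
    (isBranchMatrix_fareyInverse 0).lintegral_image_mobius hS₀ fun y hy => hy.2.1.le,
    (isBranchMatrix_fareyInverse 1).lintegral_image_mobius hS₁ fun y hy => hy.2.1,
    setLIntegral_congr ((ae_eq_refl S).inter Ico_ae_eq_Ioc), ← lintegral_add_left (by fun_prop)]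
  refine setLIntegral_congr_fun hS₀ fun y ⟨_, hy0, _⟩ => ?_
  have hy1 : 0 < 1 + y := by linarith
  rw [mobius_fareyInverse_of_le (by norm_num), mobius_fareyInverse_of_lt (by norm_num)]
  simp only [fareyInverse_denom]
  rw [← ENNReal.ofReal_mul (by positivity), ← ENNReal.ofReal_mul (by positivity),
    ← ENNReal.ofReal_add (by positivity) (by positivity)]
  congr 1
  field_simp

theorem fareyMeasure_univ : fareyMeasure univ = ∞ := by
  rw [fareyMeasure_apply MeasurableSet.univ, univ_inter]
  have hnot : ¬IntegrableOn (fun x : ℝ => x⁻¹) (Ioc 0 1) := by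
    rw [← intervalIntegrable_iff_integrableOn_Ioc_of_le zero_le_one, intervalIntegrable_inv_iff]
    simp
  by_contra h
  have hpos : 0 ≤ᵐ[volume.restrict (Ioc 0 1)] fun x : ℝ => x⁻¹ :=
    ae_restrict_of_forall_mem measurableSet_Ioc fun x hx => (inv_pos.2 hx.1).le
  exact hnot ⟨measurable_inv.aestronglyMeasurable,
    (hasFiniteIntegral_iff_ofReal hpos).2 (lt_top_iff_ne_top.2 h)⟩

/-- The Farey map is conservative and ergodic with respect to its invariant
σ-finite measure with density `1/x` on `(0,1]`, and this measure is infinite. -/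
theorem fareyMap_conservative_ergodic_infinite :
    MeasureTheory.Conservative fareyMap fareyMeasure ∧
    Ergodic fareyMap fareyMeasure ∧
    fareyMeasure Set.univ = ⊤ := by
  have htrans : IsMeasureTransitive fareyMap fareyMeasure :=
    isMeasureTransitive_fareyMap.mono_ac fareyMeasure_absolutelyContinuous
  exact ⟨htrans.conservative measurePreserving_fareyMap.quasiMeasurePreserving,
    ⟨measurePreserving_fareyMap, htrans.preErgodic⟩, fareyMeasure_univ⟩
end

section
/- For the Farey map F with invariant measure μ of density 1/x on (0,1], and the set D = [1/2, 1], the wandering rate satisfies w_n := μ(⋃_{k=1}^{n} F^{−(k−1)}(D)) ≍ log n; that is, there exist 0 < c ≤ C with c·log n ≤ μ(⋃_{k=0}^{n−1} F^{−k}([1/2,1])) ≤ C·log n for all n ≥ 2. (This is the case δ = (r_max+1)/2 of the wandering rate asymptotics w_n ≍ log n used in the paper, realized for the modular group.) -/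
open MeasureTheory Real

/-!
On `(0, 1/(k+1)]` the first `k` steps of the Farey map all use the left branch, so
`F^k(x) = x/(1 - kx)`, which lies in `[1/2, 1]` exactly when `x ≥ 1/(k+2)`. Hence the points of
`(0,1]` that enter `D = [1/2,1]` within `n` steps form the interval `[1/(n+1), 1]`, whose
measure is `∫_{1/(n+1)}^1 dx/x = log (n+1)`.
-/

lemma fareyMap_iterate_of_mul_le_one {x : ℝ} (hx : 0 < x) :
    ∀ k : ℕ, (k + 1) * x ≤ 1 → fareyMap^[k] x = x / (1 - k * x)
  | 0, _ => by simp
  | k + 1, h => by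
    push_cast at h
    have hk : 0 < 1 - k * x := by linarith
    have hy : x / (1 - k * x) ≤ 1 / 2 := by
      rw [div_le_div_iff₀ hk two_pos]; linarith
    rw [Function.iterate_succ_apply', fareyMap_iterate_of_mul_le_one hx k (by linarith),
      fareyMap, if_pos hy]
    have h₁ : 1 - x / (1 - k * x) = (1 - (k + 1) * x) / (1 - k * x) := by
      rw [eq_div_iff hk.ne', sub_mul, div_mul_cancel₀ _ hk.ne']; ring
    rw [h₁, div_div_div_cancel_right₀ hk.ne']
    push_cast
    ring

lemma fareyMap_iterate_mem_Icc_iff {x : ℝ} {k : ℕ} (hx : 0 < x) (h : (k + 1) * x ≤ 1) :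
    fareyMap^[k] x ∈ Set.Icc (1 / 2 : ℝ) 1 ↔ 1 ≤ (k + 2) * x := by
  have hk : 0 < 1 - k * x := by linarith
  rw [fareyMap_iterate_of_mul_le_one hx k h, Set.mem_Icc, le_div_iff₀ hk, div_le_one hk]
  constructor
  · rintro ⟨h₁, -⟩; linarith
  · intro h₂; constructor <;> linarith

lemma iUnion_fareyMap_iterate_preimage_inter_Ioc {n : ℕ} (hn : 1 ≤ n) :
    (⋃ k ∈ Finset.range n, (fareyMap^[k]) ⁻¹' Set.Icc (1 / 2 : ℝ) 1) ∩ Set.Ioc 0 1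
      = Set.Icc ((n + 1 : ℝ)⁻¹) 1 := by
  induction n, hn using Nat.le_induction with
  | base =>
    ext x
    simp only [Finset.range_one, Finset.set_biUnion_singleton, Function.iterate_zero,
      Set.preimage_id, Set.mem_inter_iff, Set.mem_Icc, Set.mem_Ioc, Nat.cast_one,
      one_add_one_eq_two, one_div]
    exact ⟨fun h => h.1, fun h => ⟨h, by linarith [h.1], h.2⟩⟩
  | succ n hn ih =>
    ext x
    rw [Finset.range_add_one, Finset.set_biUnion_insert, Set.union_comm,
      Set.union_inter_distrib_right, ih, Set.mem_union, Set.mem_inter_iff, Set.mem_preimage,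
      Set.mem_Icc, Set.mem_Icc, Set.mem_Icc, Set.mem_Ioc]
    push_cast
    rw [inv_le_iff_one_le_mul₀' (by positivity), inv_le_iff_one_le_mul₀' (by positivity)]
    by_cases hx : 1 ≤ (n + 1) * x
    · have : 1 ≤ (n + 1 + 1) * x := by nlinarith
      tauto
    rcases le_or_gt x 0 with hx₀ | hx₀
    · have : ¬ 1 ≤ (n + 1 + 1) * x := by nlinarith
      have : ¬ 0 < x := by linarith
      tauto
    have hmem := fareyMap_iterate_mem_Icc_iff hx₀ (not_le.mp hx).le
    rw [Set.mem_Icc] at hmem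
    rw [hmem]
    constructor
    · rintro (⟨h, -⟩ | ⟨h, -, h₁⟩) <;> constructor <;> linarith
    · rintro ⟨h, h₁⟩; exact Or.inr ⟨by linarith, hx₀, h₁⟩

lemma withDensity_ofReal_inv_Icc {a b : ℝ} (ha : 0 < a) (hab : a ≤ b) :
    volume.withDensity (fun x => ENNReal.ofReal x⁻¹) (Set.Icc a b)
      = ENNReal.ofReal (log (b / a)) := by
  have hpos : ∀ x ∈ Set.Icc a b, 0 < x := fun x hx => ha.trans_le hx.1
  have hint : IntegrableOn (fun x : ℝ => x⁻¹) (Set.Icc a b) :=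
    (continuousOn_inv₀.mono fun x hx => (hpos x hx).ne').integrableOn_Icc
  have hnonneg : 0 ≤ᵐ[volume.restrict (Set.Icc a b)] fun x : ℝ => x⁻¹ :=
    (ae_restrict_mem measurableSet_Icc).mono fun x hx => (inv_pos.mpr (hpos x hx)).le
  rw [withDensity_apply _ measurableSet_Icc, ← ofReal_integral_eq_lintegral_ofReal hint hnonneg,
    integral_Icc_eq_integral_Ioc, ← intervalIntegral.integral_of_le hab,
    integral_inv_of_pos ha (ha.trans_le hab)]

lemma fareyMeasure_iUnion_fareyMap_iterate_preimage {n : ℕ} (hn : 1 ≤ n) :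
    (fareyMeasure (⋃ k ∈ Finset.range n, (fareyMap^[k]) ⁻¹' Set.Icc (1 / 2 : ℝ) 1)).toReal
      = log (n + 1) := by
  have hn₁ : (0 : ℝ) < n + 1 := by positivity
  rw [fareyMeasure, Measure.restrict_apply' measurableSet_Ioc,
    iUnion_fareyMap_iterate_preimage_inter_Ioc hn,
    withDensity_ofReal_inv_Icc (inv_pos.mpr hn₁) (inv_le_one_of_one_le₀ (by linarith)),
    ENNReal.toReal_ofReal (log_nonneg (by simp)), div_inv_eq_mul, one_mul]

lemma log_add_one_le_two_mul_log {x : ℝ} (hx : 2 ≤ x) : log (x + 1) ≤ 2 * log x := by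
  rw [← Nat.cast_ofNat, ← log_pow]
  exact log_le_log (by linarith) (by nlinarith)

/-- The wandering rate of the set `D = [1/2, 1]` for the Farey map with its
infinite invariant measure is logarithmic:
`w_n = μ(⋃_{k=0}^{n-1} F^{-k}(D)) ≍ log n`. -/
theorem fareyMap_wandering_rate_log :
    ∃ c C : ℝ, 0 < c ∧ c ≤ C ∧ ∀ n : ℕ, 2 ≤ n →
      c * Real.log n ≤
        (fareyMeasure (⋃ k ∈ Finset.range n,
          (fareyMap^[k]) ⁻¹' Set.Icc (1 / 2 : ℝ) 1)).toReal ∧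
      (fareyMeasure (⋃ k ∈ Finset.range n,
          (fareyMap^[k]) ⁻¹' Set.Icc (1 / 2 : ℝ) 1)).toReal ≤
        C * Real.log n := by
  refine ⟨1, 2, one_pos, one_le_two, fun n hn => ?_⟩
  have hn₂ : (2 : ℝ) ≤ n := by exact_mod_cast hn
  rw [fareyMeasure_iUnion_fareyMap_iterate_preimage (by omega), one_mul]
  exact ⟨log_le_log (by linarith) (by linarith), log_add_one_le_two_mul_log hn₂⟩
end

section
/- For the Farey map F with invariant measure μ of density 1/x on (0,1], and D = [1/2,1], the correlation sums satisfy ∑_{k=0}^{n} μ(D ∩ F^{−k}(D)) ≍ n/log n for n ≥ 2. (This is the key step of the paper's proof, ∑_{k=0}^{n} μ_δ(D ∩ T^{−k}(D)) ≍ ν_n with return sequence ν_n ≍ n/log n in the case δ = (r_max+1)/2, realized for the modular group.) -/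
open MeasureTheory Real

/-!
Almost every `x ∈ D` returns to `D`; on the irrationals of `(1/2, 1)` the return time is
`φ x = ⌊1 / (1 - x)⌋ - 1` and the first-return map `R` has full branches
`y ↦ (i y + 1) / ((i + 1) y + 1)` on `{φ = i + 1}`. By the change of variables formula on each
branch, `R` preserves `μ`, and `μ {φ ≥ t} = log ((t + 1) / t)`. The times `k ≤ n` at which
`F^[k] x ∈ D` are the Birkhoff sums `τ_m = φ + φ ∘ R + ⋯ + φ ∘ R^[m-1]` that are at most `n`, so
the correlation sum is `∑_{m ≤ n} μ {τ_m ≤ n}`.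

Lower bound: `∫ min φ n dμ = log (n + 1)`, so by invariance and Markov's inequality
`μ {τ_m > n} ≤ m log (n + 1) / n`, and each of the first `n / (8 log (n + 1))` terms is at
least `log 2 - 1/8 ≥ 1/2`.

Upper bound: on branch `i` the transfer operator of `R` weighted by `exp (-φ / n)` loses a fraction
`≥ (i + 1) / (2 n)` of its mass for `i < n`; summing against the branch weights gives a harmonic
sum, so this operator contracts by `1 - log (n + 1) / (8 n)`. Hence
`∫ exp (-τ_m / n) dμ ≤ (1 - log (n + 1) / (8 n)) ^ m log 2`, and the Chernoff bound
`μ {τ_m ≤ n} ≤ e ∫ exp (-τ_m / n) dμ` summed over `m` is `O (n / log n)`.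
-/

open Set Filter Topology
open scoped ENNReal

lemma Real.div_two_le_one_sub_exp_neg {t : ℝ} (h0 : 0 ≤ t) (h1 : t ≤ 1) :
    t / 2 ≤ 1 - exp (-t) := by
  have hexp : exp (-t) ≤ (1 + t)⁻¹ := by
    rw [exp_neg]
    exact inv_anti₀ (by linarith) (by linarith [add_one_le_exp t])
  have : t / 2 ≤ t / (1 + t) := div_le_div_of_nonneg_left h0 (by linarith) (by linarith)
  have h3 : 1 - (1 + t)⁻¹ = t / (1 + t) := by field_simp; ring
  linarith

section FirstReturn

variable {α : Type*}

structure IsFirstReturnMap (F : α → α) (D A : Set α) (φ : α → ℕ) (R : α → α) : Prop where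
  subset : A ⊆ D
  mapsTo : MapsTo R A A
  one_le : ∀ x ∈ A, 1 ≤ φ x
  iterate_eq : ∀ x ∈ A, F^[φ x] x = R x
  iterate_notMem : ∀ x ∈ A, ∀ k, 0 < k → k < φ x → F^[k] x ∉ D

namespace IsFirstReturnMap

variable {F R : α → α} {D A : Set α} {φ : α → ℕ}

lemma birkhoffSum_lt_birkhoffSum_succ (h : IsFirstReturnMap F D A φ R) {x : α} (hx : x ∈ A)
    (m : ℕ) : birkhoffSum R φ m x < birkhoffSum R φ (m + 1) x := by
  rw [birkhoffSum_succ]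
  have := h.one_le _ (h.mapsTo.iterate m hx)
  omega

lemma strictMono_birkhoffSum (h : IsFirstReturnMap F D A φ R) {x : α} (hx : x ∈ A) :
    StrictMono fun m => birkhoffSum R φ m x :=
  strictMono_nat_of_lt_succ (h.birkhoffSum_lt_birkhoffSum_succ hx)

lemma iterate_mem_iff (h : IsFirstReturnMap F D A φ R) (k : ℕ) :
    ∀ x ∈ A, F^[k] x ∈ D ↔ ∃ m, birkhoffSum R φ m x = k := by
  induction k using Nat.strong_induction_on with
  | _ k ih =>
    intro x hx
    rcases Nat.eq_zero_or_pos k with rfl | hk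
    · exact ⟨fun _ => ⟨0, birkhoffSum_zero _ _ _⟩, fun _ => h.subset hx⟩
    have hsucc (m : ℕ) : birkhoffSum R φ (m + 1) x = φ x + birkhoffSum R φ m (R x) :=
      birkhoffSum_succ' _ _ _ _
    rcases lt_or_ge k (φ x) with hkφ | hφk
    · refine iff_of_false (h.iterate_notMem x hx k hk hkφ) ?_
      rintro ⟨_ | m, hm⟩
      · rw [birkhoffSum_zero] at hm; omega
      · rw [hsucc] at hm; omega
    · have hiter : F^[k] x = F^[k - φ x] (R x) := by
        rw [← h.iterate_eq x hx, ← Function.iterate_add_apply, Nat.sub_add_cancel hφk]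
      rw [hiter, ih (k - φ x) (by have := h.one_le x hx; omega) (R x) (h.mapsTo hx)]
      constructor
      · rintro ⟨m, hm⟩
        exact ⟨m + 1, by rw [hsucc]; omega⟩
      · rintro ⟨_ | m, hm⟩
        · rw [birkhoffSum_zero] at hm; have := h.one_le x hx; omega
        · exact ⟨m, by rw [hsucc] at hm; omega⟩

lemma card_visits_eq [DecidablePred (· ∈ D)] (h : IsFirstReturnMap F D A φ R) {x : α}
    (hx : x ∈ A) (n : ℕ) :
    ((Finset.range (n + 1)).filter fun k => F^[k] x ∈ D).card =
      ((Finset.range (n + 1)).filter fun m => birkhoffSum R φ m x ≤ n).card := by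
  refine (Finset.card_bij (fun m _ => birkhoffSum R φ m x) ?_ ?_ ?_).symm
  · intro m hm
    simp only [Finset.mem_filter, Finset.mem_range] at hm ⊢
    exact ⟨by omega, (h.iterate_mem_iff _ x hx).2 ⟨m, rfl⟩⟩
  · exact fun _ _ _ _ hab => (h.strictMono_birkhoffSum hx).injective hab
  · intro k hk
    simp only [Finset.mem_filter, Finset.mem_range] at hk
    obtain ⟨m, rfl⟩ := (h.iterate_mem_iff k x hx).1 hk.2
    have := (h.strictMono_birkhoffSum hx).le_apply (x := m)
    exact ⟨m, by simp only [Finset.mem_filter, Finset.mem_range]; omega, rfl⟩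

end IsFirstReturnMap

end FirstReturn

lemma min_birkhoffSum_le {α : Type*} (T : α → α) (φ : α → ℕ) (n m : ℕ) (x : α) :
    min (birkhoffSum T φ m x) n ≤ birkhoffSum T (fun y => min (φ y) n) m x := by
  induction m generalizing x with
  | zero => simp
  | succ m ih =>
    rw [birkhoffSum_succ', birkhoffSum_succ']
    have := ih (T x)
    omega

section BirkhoffSum

variable {α : Type*} [MeasurableSpace α] {μ : Measure α} {T : α → α}

lemma Measurable.birkhoffSum {M : Type*} [AddCommMonoid M] [MeasurableSpace M]
    [MeasurableAdd₂ M] (hT : Measurable T) {g : α → M} (hg : Measurable g) (m : ℕ) :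
    Measurable (birkhoffSum T g m) := by
  unfold _root_.birkhoffSum
  fun_prop

lemma MeasureTheory.MeasurePreserving.lintegral_birkhoffSum (hT : MeasurePreserving T μ μ)
    {g : α → ℝ≥0∞} (hg : Measurable g) (m : ℕ) :
    ∫⁻ x, birkhoffSum T g m x ∂μ = m * ∫⁻ x, g x ∂μ := by
  simp only [birkhoffSum]
  rw [lintegral_finsetSum (f := fun k x => g (T^[k] x)) _
    fun k _ => hg.comp (hT.measurable.iterate k)]
  simp [(hT.iterate _).lintegral_comp hg]

lemma natCast_mul_measure_lt_birkhoffSum_le (hT : MeasurePreserving T μ μ) {φ : α → ℕ}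
    (hφ : Measurable φ) (n m : ℕ) :
    n * μ {x | n < birkhoffSum T φ m x} ≤ m * ∫⁻ x, ((min (φ x) n : ℕ) : ℝ≥0∞) ∂μ := by
  set ψ : α → ℝ≥0∞ := fun x => ((min (φ x) n : ℕ) : ℝ≥0∞)
  have hψ : Measurable ψ := measurable_from_top.comp (hφ.min measurable_const)
  have hsub : {x | n < birkhoffSum T φ m x} ⊆ {x | (n : ℝ≥0∞) ≤ birkhoffSum T ψ m x} := by
    intro x hx
    have hle := min_birkhoffSum_le T φ n m x
    rw [min_eq_right (le_of_lt hx)] at hle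
    show (n : ℝ≥0∞) ≤ ∑ k ∈ Finset.range m, ((min (φ (T^[k] x)) n : ℕ) : ℝ≥0∞)
    exact_mod_cast hle
  calc (n : ℝ≥0∞) * μ {x | n < birkhoffSum T φ m x}
      ≤ n * μ {x | (n : ℝ≥0∞) ≤ birkhoffSum T ψ m x} := by gcongr
    _ ≤ ∫⁻ x, birkhoffSum T ψ m x ∂μ :=
      mul_meas_ge_le_lintegral₀ (hT.measurable.birkhoffSum hψ m).aemeasurable _
    _ = m * ∫⁻ x, ψ x ∂μ := hT.lintegral_birkhoffSum hψ m

lemma measure_le_exp_one_mul_lintegral {f : α → ℝ} (hf : Measurable f) {s : ℝ} (hs : 0 < s) :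
    μ {x | f x ≤ s} ≤ ENNReal.ofReal (exp 1) * ∫⁻ x, ENNReal.ofReal (exp (-f x / s)) ∂μ := by
  have hpt : ∀ x ∈ {x | f x ≤ s}, 1 ≤ ENNReal.ofReal (exp 1) * ENNReal.ofReal (exp (-f x / s)) := by
    intro x hx
    rw [← ENNReal.ofReal_mul (exp_nonneg _), ← exp_add, ← ENNReal.ofReal_one]
    refine ENNReal.ofReal_le_ofReal (one_le_exp ?_)
    have : f x / s ≤ 1 := (div_le_one hs).2 hx
    rw [neg_div]
    linarith
  calc μ {x | f x ≤ s} = ∫⁻ _ in {x | f x ≤ s}, 1 ∂μ := by rw [setLIntegral_const, one_mul]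
    _ ≤ ∫⁻ x in {x | f x ≤ s}, ENNReal.ofReal (exp 1) * ENNReal.ofReal (exp (-f x / s)) ∂μ :=
      setLIntegral_mono (by fun_prop) hpt
    _ ≤ _ := by
      rw [lintegral_const_mul' _ _ ENNReal.ofReal_ne_top]
      exact mul_le_mul_right (setLIntegral_le_lintegral _ _) _

lemma lintegral_exp_neg_birkhoffSum_le (hT : Measurable T) {φ : α → ℕ} (hφ : Measurable φ)
    {s : ℝ} {ρ : ℝ≥0∞}
    (hρ : ∀ g : α → ℝ≥0∞, Measurable g →
      ∫⁻ x, ENNReal.ofReal (exp (-φ x / s)) * g (T x) ∂μ ≤ ρ * ∫⁻ x, g x ∂μ) (m : ℕ) :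
    ∫⁻ x, ENNReal.ofReal (exp (-((birkhoffSum T φ m x : ℕ) : ℝ) / s)) ∂μ ≤ ρ ^ m * μ univ := by
  induction m with
  | zero => simp
  | succ m ih =>
    have hsplit (x : α) : ENNReal.ofReal (exp (-((birkhoffSum T φ (m + 1) x : ℕ) : ℝ) / s)) =
        ENNReal.ofReal (exp (-φ x / s)) *
          ENNReal.ofReal (exp (-((birkhoffSum T φ m (T x) : ℕ) : ℝ) / s)) := by
      rw [← ENNReal.ofReal_mul (exp_nonneg _), ← exp_add, birkhoffSum_succ']
      push_cast
      ring_nf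
    have hmeas : Measurable fun x =>
        ENNReal.ofReal (exp (-((birkhoffSum T φ m x : ℕ) : ℝ) / s)) := by
      have := hT.birkhoffSum hφ m
      fun_prop
    calc ∫⁻ x, ENNReal.ofReal (exp (-((birkhoffSum T φ (m + 1) x : ℕ) : ℝ) / s)) ∂μ
        ≤ ρ * ∫⁻ x, ENNReal.ofReal (exp (-((birkhoffSum T φ m x : ℕ) : ℝ) / s)) ∂μ := by
          simpa only [hsplit] using hρ _ hmeas
      _ ≤ ρ * (ρ ^ m * μ univ) := by gcongr
      _ = ρ ^ (m + 1) * μ univ := by ring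

end BirkhoffSum

lemma setLIntegral_ofReal_inv_Ioo {a b : ℝ} (ha : 0 < a) (hab : a ≤ b) :
    ∫⁻ x in Ioo a b, ENNReal.ofReal x⁻¹ = ENNReal.ofReal (log b - log a) := by
  have hInt : IntegrableOn (fun x : ℝ => x⁻¹) (Ioo a b) :=
    ((continuousOn_id.inv₀ fun x hx => (ha.trans_le hx.1).ne').integrableOn_Icc).mono_set
      Ioo_subset_Icc_self
  rw [← ofReal_integral_eq_lintegral_ofReal hInt
      ((ae_restrict_iff' measurableSet_Ioo).2 (ae_of_all _ fun x hx => inv_nonneg.2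
        (ha.trans hx.1).le)),
    ← integral_Ioc_eq_integral_Ioo, ← intervalIntegral.integral_of_le hab,
    integral_inv (by rw [uIcc_of_le hab]; exact fun h => (ha.trans_le h.1).false),
    log_div (ha.trans_le hab).ne' ha.ne']

open Classical in
lemma MeasureTheory.lintegral_card_filter_mem {α ι : Type*} [MeasurableSpace α] (μ : Measure α)
    (s : Finset ι) {S : ι → Set α} (hS : ∀ i, MeasurableSet (S i)) :
    ∫⁻ x, (((s.filter fun i => x ∈ S i).card : ℕ) : ℝ≥0∞) ∂μ = ∑ i ∈ s, μ (S i) := by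
  simp_rw [Finset.card_filter, Nat.cast_sum, Nat.cast_ite, Nat.cast_one, Nat.cast_zero]
  rw [lintegral_finsetSum (f := fun i x => if x ∈ S i then (1 : ℝ≥0∞) else 0) _
    fun i _ => measurable_const.ite (hS i) measurable_const]
  refine Finset.sum_congr rfl fun i _ => ?_
  rw [← lintegral_indicator_one (hS i)]
  simp only [indicator_apply, Pi.one_apply]

namespace Farey

/-! ### The first-return map to `D` -/

/-- `D` up to a null set, chosen so that it is invariant under the first-return map. -/
def inducedDomain : Set ℝ := Ioo (1 / 2) 1 ∩ {x | Irrational x}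

noncomputable def returnTime (x : ℝ) : ℕ := ⌊(1 - x)⁻¹⌋₊ - 1

noncomputable def inducedMap (x : ℝ) : ℝ := (1 - x) / (1 - returnTime x * (1 - x))

noncomputable def inverseBranch (i : ℕ) (y : ℝ) : ℝ := (i * y + 1) / ((i + 1) * y + 1)

lemma measurableSet_inducedDomain : MeasurableSet inducedDomain :=
  measurableSet_Ioo.inter (countable_range ((↑) : ℚ → ℝ)).measurableSet.compl

@[fun_prop]
lemma measurable_returnTime : Measurable returnTime := by
  unfold returnTime
  fun_prop

@[fun_prop]
lemma measurable_inducedMap : Measurable inducedMap := by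
  unfold inducedMap
  fun_prop

lemma returnTime_eq {x : ℝ} {j : ℕ} (h1 : (j + 1) * (1 - x) ≤ 1) (h2 : 1 < (j + 2) * (1 - x)) :
    returnTime x = j := by
  have hu : 0 < 1 - x := by nlinarith
  have hfloor : ⌊(1 - x)⁻¹⌋₊ = j + 1 := by
    rw [Nat.floor_eq_iff (by positivity)]
    push_cast
    constructor
    · rwa [le_inv_comm₀ (by positivity) hu, inv_eq_one_div, le_div_iff₀ (by positivity),
        mul_comm]
    · rwa [inv_lt_comm₀ hu (by positivity), inv_eq_one_div, div_lt_iff₀ (by positivity),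
        show (j : ℝ) + 1 + 1 = j + 2 by ring, mul_comm]
  simp [returnTime, hfloor]

lemma returnTime_spec {x : ℝ} (hx : x ∈ inducedDomain) :
    1 ≤ returnTime x ∧ (returnTime x + 1) * (1 - x) < 1 ∧ 1 < (returnTime x + 2) * (1 - x) := by
  obtain ⟨⟨hx1, hx2⟩, hirr⟩ := hx
  have hu : 0 < 1 - x := by linarith
  set t := (1 - x)⁻¹ with ht
  have htirr : Irrational t := by rw [ht, irrational_inv_iff]; simpa using hirr.ratCast_sub 1
  have ht2 : 2 < t := by rw [ht, lt_inv_comm₀ two_pos hu]; linarith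
  have hN : 2 ≤ ⌊t⌋₊ := by rw [Nat.le_floor_iff (by positivity)]; push_cast; linarith
  have hlo : (⌊t⌋₊ : ℝ) < t := (Nat.floor_le (by positivity)).lt_of_ne (htirr.ne_nat _).symm
  have hhi : t < ⌊t⌋₊ + 1 := Nat.lt_floor_add_one t
  have hcast : (returnTime x : ℝ) = ⌊t⌋₊ - 1 := by
    rw [returnTime, ← ht, Nat.cast_sub (by omega)]
    push_cast
    ring
  have hut : (1 - x) * t = 1 := mul_inv_cancel₀ hu.ne'
  refine ⟨by rw [returnTime, ← ht]; omega, ?_, ?_⟩ <;> rw [hcast] <;> nlinarith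

lemma one_le_returnTime {x : ℝ} (hx : x ∈ inducedDomain) : 1 ≤ returnTime x :=
  (returnTime_spec hx).1

lemma inducedMap_mem_Ioo {x : ℝ} (hx : x ∈ inducedDomain) : inducedMap x ∈ Ioo (1 / 2) 1 := by
  obtain ⟨hj, h1, h2⟩ := returnTime_spec hx
  have hu : 0 < 1 - x := by linarith [hx.1.2]
  have hden : 0 < 1 - returnTime x * (1 - x) := by linarith
  constructor
  · rw [inducedMap, lt_div_iff₀ hden]; linarith
  · rw [inducedMap, div_lt_one hden]; linarith

lemma inverseBranch_inducedMap {x : ℝ} (hx : x ∈ inducedDomain) :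
    inverseBranch (returnTime x - 1) (inducedMap x) = x := by
  obtain ⟨hj, h1, -⟩ := returnTime_spec hx
  have hu : 0 < 1 - x := by linarith [hx.1.2]
  have hden : 1 - returnTime x * (1 - x) ≠ 0 := by linarith
  rw [inverseBranch, inducedMap, Nat.cast_sub hj, Nat.cast_one]
  field_simp
  ring

lemma inverseBranch_mem_Ioo {y : ℝ} (hy : y ∈ Ioo (1 / 2) 1) (i : ℕ) :
    inverseBranch i y ∈ Ioo (1 / 2) 1 := by
  obtain ⟨hy1, hy2⟩ := hy
  have hden : 0 < ((i : ℝ) + 1) * y + 1 := by positivity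
  constructor
  · rw [inverseBranch, lt_div_iff₀ hden]; nlinarith
  · rw [inverseBranch, div_lt_one hden]; nlinarith

lemma one_sub_inverseBranch {y : ℝ} (hy : 0 < y) (i : ℕ) :
    1 - inverseBranch i y = y / ((i + 1) * y + 1) := by
  rw [inverseBranch]
  field_simp
  ring

lemma returnTime_inverseBranch {y : ℝ} (hy : y ∈ Ioo (1 / 2) 1) (i : ℕ) :
    returnTime (inverseBranch i y) = i + 1 := by
  have hy0 : 0 < y := by linarith [hy.1]
  have hden : 0 < ((i : ℝ) + 1) * y + 1 := by positivity
  apply returnTime_eq <;> rw [one_sub_inverseBranch hy0] <;> push_cast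
  · rw [← mul_div_assoc, div_le_one hden]; linarith [hy.2]
  · rw [← mul_div_assoc, one_lt_div hden]; linarith [hy.1]

lemma inducedMap_inverseBranch {y : ℝ} (hy : y ∈ Ioo (1 / 2) 1) (i : ℕ) :
    inducedMap (inverseBranch i y) = y := by
  have hy0 : 0 < y := by linarith [hy.1]
  have hden : 0 < ((i : ℝ) + 1) * y + 1 := by positivity
  rw [inducedMap, returnTime_inverseBranch hy, one_sub_inverseBranch hy0]
  push_cast
  field_simp
  ring

lemma inducedMap_ratCast (q : ℚ) :
    inducedMap q = ((1 - q) / (1 - returnTime q * (1 - q)) : ℚ) := by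
  push_cast
  rfl

lemma inverseBranch_ratCast (i : ℕ) (q : ℚ) :
    inverseBranch i q = ((i * q + 1) / ((i + 1) * q + 1) : ℚ) := by
  push_cast
  rfl

-- Irrationality is preserved because both `inducedMap` and its inverse branches send `ℚ` to `ℚ`.
lemma mapsTo_inducedMap : MapsTo inducedMap inducedDomain inducedDomain := by
  refine fun x hx => ⟨inducedMap_mem_Ioo hx, ?_⟩
  rintro ⟨q, hq⟩
  refine hx.2 ⟨_, (inverseBranch_ratCast (returnTime x - 1) q).symm.trans ?_⟩
  rw [hq, inverseBranch_inducedMap hx]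

lemma mapsTo_inverseBranch (i : ℕ) : MapsTo (inverseBranch i) inducedDomain inducedDomain := by
  refine fun y hy => ⟨inverseBranch_mem_Ioo hy.1 i, ?_⟩
  rintro ⟨q, hq⟩
  refine hy.2 ⟨_, (inducedMap_ratCast q).symm.trans ?_⟩
  rw [hq, inducedMap_inverseBranch hy.1]

lemma iUnion_image_inverseBranch : ⋃ i, inverseBranch i '' inducedDomain = inducedDomain := by
  refine subset_antisymm (iUnion_subset fun i => (mapsTo_inverseBranch i).image_subset) ?_
  intro x hx
  exact mem_iUnion.2 ⟨_, _, mapsTo_inducedMap hx, inverseBranch_inducedMap hx⟩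

lemma pairwise_disjoint_image_inverseBranch :
    Pairwise (Function.onFun Disjoint fun i => inverseBranch i '' inducedDomain) := by
  intro i j hij
  refine disjoint_left.2 ?_
  rintro _ ⟨y, hy, rfl⟩ ⟨z, hz, hzy⟩
  have := returnTime_inverseBranch hy.1 i
  rw [← hzy, returnTime_inverseBranch hz.1] at this
  omega

lemma measurable_fareyMap : Measurable fareyMap :=
  Measurable.ite measurableSet_Iic (by fun_prop) (by fun_prop)

lemma fareyMap_of_le_half {x : ℝ} (hx : x ≤ 1 / 2) : fareyMap x = x / (1 - x) := if_pos hx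

lemma fareyMap_of_half_lt {x : ℝ} (hx : 1 / 2 < x) : fareyMap x = (1 - x) / x :=
  if_neg (not_le.2 hx)

/-- On the left branch `1 / F y = 1 / y - 1`, so `1 / F^[i] x = 1 / (1 - x) - i` until the orbit
re-enters `D`. -/
lemma fareyMap_iterate_eq {x : ℝ} (hx : x ∈ inducedDomain) {i : ℕ} (hi : 1 ≤ i)
    (hij : i ≤ returnTime x) : fareyMap^[i] x = (1 - x) / (1 - i * (1 - x)) := by
  obtain ⟨-, h1, -⟩ := returnTime_spec hx
  have hu : 0 < 1 - x := by linarith [hx.1.2]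
  induction i, hi using Nat.le_induction with
  | base =>
    rw [Function.iterate_one, fareyMap_of_half_lt hx.1.1]
    congr 1
    ring
  | succ i hi ih =>
    have hiφ : (i : ℝ) + 2 ≤ returnTime x + 1 := by
      exact_mod_cast (by omega : i + 2 ≤ returnTime x + 1)
    have hden : 0 < 1 - i * (1 - x) := by nlinarith
    have hsub : 1 - (1 - x) / (1 - i * (1 - x)) = (1 - (i + 1) * (1 - x)) / (1 - i * (1 - x)) := by
      rw [eq_div_iff hden.ne', sub_mul, div_mul_cancel₀ _ hden.ne']
      ring
    rw [Function.iterate_succ_apply', ih (by omega), fareyMap_of_le_half, hsub,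
      div_div_div_cancel_right₀ hden.ne']
    · push_cast
      rfl
    · rw [div_le_iff₀ hden]
      nlinarith

lemma fareyMap_iterate_returnTime {x : ℝ} (hx : x ∈ inducedDomain) :
    fareyMap^[returnTime x] x = inducedMap x :=
  fareyMap_iterate_eq hx (one_le_returnTime hx) le_rfl

lemma fareyMap_iterate_lt_half {x : ℝ} (hx : x ∈ inducedDomain) {k : ℕ} (hk : 0 < k)
    (hkφ : k < returnTime x) : fareyMap^[k] x < 1 / 2 := by
  obtain ⟨-, h1, -⟩ := returnTime_spec hx
  have hu : 0 < 1 - x := by linarith [hx.1.2]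
  have hkφ' : (k : ℝ) + 2 ≤ returnTime x + 1 := by
    exact_mod_cast (by omega : k + 2 ≤ returnTime x + 1)
  rw [fareyMap_iterate_eq hx hk hkφ.le, div_lt_iff₀ (by nlinarith)]
  nlinarith

lemma isFirstReturnMap :
    IsFirstReturnMap fareyMap (Icc (1 / 2) 1) inducedDomain returnTime inducedMap where
  subset _ hx := Ioo_subset_Icc_self hx.1
  mapsTo := mapsTo_inducedMap
  one_le _ := one_le_returnTime
  iterate_eq _ := fareyMap_iterate_returnTime
  iterate_notMem _ hx _ hk hkφ hmem := (fareyMap_iterate_lt_half hx hk hkφ).not_ge hmem.1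

/-! ### The invariant measure and the transfer operator -/

noncomputable def inducedMeasure : Measure ℝ := fareyMeasure.restrict inducedDomain

lemma inducedMeasure_eq_withDensity :
    inducedMeasure = (volume.restrict inducedDomain).withDensity fun x => ENNReal.ofReal x⁻¹ := by
  have hsub : inducedDomain ⊆ Ioc 0 1 := fun x hx => ⟨by linarith [hx.1.1], hx.1.2.le⟩
  rw [inducedMeasure, fareyMeasure, Measure.restrict_restrict measurableSet_inducedDomain,
    inter_eq_left.2 hsub, restrict_withDensity measurableSet_inducedDomain]

lemma lintegral_inducedMeasure (f : ℝ → ℝ≥0∞) :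
    ∫⁻ x, f x ∂inducedMeasure = ∫⁻ x in inducedDomain, ENNReal.ofReal x⁻¹ * f x := by
  rw [inducedMeasure_eq_withDensity, lintegral_withDensity_eq_lintegral_mul_non_measurable _
    (by fun_prop) (ae_of_all _ fun _ => ENNReal.ofReal_lt_top)]
  rfl

lemma inducedMeasure_apply {s : Set ℝ} (hs : MeasurableSet s) :
    inducedMeasure s = ∫⁻ x in inducedDomain ∩ s, ENNReal.ofReal x⁻¹ := by
  rw [inducedMeasure_eq_withDensity, withDensity_apply _ hs, Measure.restrict_restrict hs,
    inter_comm]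

lemma inducedMeasure_Ioi {a : ℝ} (ha : 1 / 2 ≤ a) (ha1 : a ≤ 1) :
    inducedMeasure (Ioi a) = ENNReal.ofReal (-log a) := by
  have hset : inducedDomain ∩ Ioi a = Ioo a 1 \ range ((↑) : ℚ → ℝ) := by
    ext x
    constructor
    · rintro ⟨⟨⟨-, h1⟩, h2⟩, h3 : a < x⟩
      exact ⟨⟨h3, h1⟩, h2⟩
    · rintro ⟨⟨h1, h2⟩, h3⟩
      exact ⟨⟨⟨by linarith, h2⟩, h3⟩, h1⟩
  have hnull : volume (range ((↑) : ℚ → ℝ)) = 0 := (countable_range _).measure_zero _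
  rw [inducedMeasure_apply measurableSet_Ioi, hset,
    setLIntegral_congr (sdiff_null_ae_eq_self hnull),
    setLIntegral_ofReal_inv_Ioo (by linarith) ha1, log_one, zero_sub]

lemma inducedMeasure_univ : inducedMeasure univ = ENNReal.ofReal (log 2) := by
  have hsub : inducedDomain ⊆ Ioi (1 / 2) := fun x hx => hx.1.1
  have hlog : log 2 = -log (1 / 2) := by rw [one_div, log_inv, neg_neg]
  rw [hlog, ← inducedMeasure_Ioi le_rfl (by norm_num), inducedMeasure,
    Measure.restrict_apply MeasurableSet.univ, Measure.restrict_apply measurableSet_Ioi,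
    univ_inter, inter_eq_right.2 hsub]

instance : IsFiniteMeasure inducedMeasure :=
  ⟨by rw [inducedMeasure_univ]; exact ENNReal.ofReal_lt_top⟩

lemma Icc_ae_eq_inducedDomain : Icc (1 / 2 : ℝ) 1 =ᵐ[fareyMeasure] inducedDomain := by
  have hac : fareyMeasure ≪ volume :=
    (Measure.absolutelyContinuous_of_le Measure.restrict_le_self).trans
      (withDensity_absolutelyContinuous _ _)
  refine (ae_eq_set.2 ⟨hac ?_, ?_⟩)
  · refine measure_mono_null (t := range ((↑) : ℚ → ℝ)) ?_ ((countable_range _).measure_zero _)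
    rintro x ⟨⟨hlo, hhi⟩, hx⟩
    by_contra hq
    have hne : 1 / 2 ≠ x := fun h => hq ⟨1 / 2, by rw [← h]; norm_num⟩
    have hne' : x ≠ 1 := fun h => hq ⟨1, by rw [h]; norm_num⟩
    exact hx ⟨⟨hlo.lt_of_ne hne, hhi.lt_of_ne hne'⟩, hq⟩
  · rw [sdiff_eq_empty.2 fun x hx => Ioo_subset_Icc_self hx.1, measure_empty]

lemma le_returnTime_iff {x : ℝ} (hx : x ∈ inducedDomain) (t : ℕ) :
    t ≤ returnTime x ↔ t / (t + 1) < x := by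
  obtain ⟨-, h1, h2⟩ := returnTime_spec hx
  rw [div_lt_iff₀ (by positivity)]
  constructor
  · intro h
    have : (t : ℝ) ≤ returnTime x := by exact_mod_cast h
    nlinarith [hx.1.2]
  · intro h
    by_contra! hlt
    have : (returnTime x : ℝ) + 1 ≤ t := by exact_mod_cast hlt
    nlinarith [hx.1.2]

lemma measurableSet_le_returnTime (t : ℕ) : MeasurableSet {x | t ≤ returnTime x} :=
  measurable_returnTime measurableSet_Ici

lemma inducedMeasure_le_returnTime {t : ℕ} (ht : 1 ≤ t) :
    inducedMeasure {x | t ≤ returnTime x} = ENNReal.ofReal (log (t + 1) - log t) := by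
  have htR : (1 : ℝ) ≤ t := by exact_mod_cast ht
  have hset : {x | t ≤ returnTime x} ∩ inducedDomain = Ioi ((t : ℝ) / (t + 1)) ∩ inducedDomain :=
    Set.ext fun x => and_congr_left fun hx => le_returnTime_iff hx t
  rw [inducedMeasure, Measure.restrict_apply (measurableSet_le_returnTime t), hset,
    ← Measure.restrict_apply measurableSet_Ioi, ← inducedMeasure,
    inducedMeasure_Ioi ((le_div_iff₀ (by positivity)).2 (by linarith))
      ((div_le_one (by positivity)).2 (by linarith)),
    log_div (by positivity) (by positivity), neg_sub]

lemma lintegral_min_returnTime (n : ℕ) :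
    ∫⁻ x, ((min (returnTime x) n : ℕ) : ℝ≥0∞) ∂inducedMeasure = ENNReal.ofReal (log (n + 1)) := by
  induction n with
  | zero => simp
  | succ n ih =>
    have hsplit (x : ℝ) : ((min (returnTime x) (n + 1) : ℕ) : ℝ≥0∞) =
        (min (returnTime x) n : ℕ) + {x | n + 1 ≤ returnTime x}.indicator 1 x := by
      by_cases h : n + 1 ≤ returnTime x
      · rw [indicator_of_mem (show x ∈ {x | n + 1 ≤ returnTime x} from h), min_eq_right h,
          min_eq_right (by omega)]
        simp
      · rw [indicator_of_notMem (show x ∉ {x | n + 1 ≤ returnTime x} from h),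
          min_eq_left (by omega), min_eq_left (by omega), add_zero]
    have hlog : log (n + 1) ≤ log (n + 1 + 1) := log_le_log (by positivity) (by linarith)
    simp_rw [hsplit]
    rw [lintegral_add_left (by fun_prop), ih,
      lintegral_indicator_one (measurableSet_le_returnTime _),
      inducedMeasure_le_returnTime (by omega), ← ENNReal.ofReal_add (log_nonneg (by simp)) (by
        push_cast; linarith)]
    push_cast
    ring_nf

/-- `|(inverseBranch i)' y| / inverseBranch i y`: the weight of branch `i` in the transfer
operator of `inducedMap` with respect to the density `1 / x`. -/
noncomputable def branchWeight (i : ℕ) (y : ℝ) : ℝ := (((i + 1) * y + 1) * (i * y + 1))⁻¹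

lemma hasDerivAt_inverseBranch (i : ℕ) {y : ℝ} (hy : 0 < y) :
    HasDerivAt (inverseBranch i) (-(((i + 1) * y + 1) ^ 2)⁻¹) y := by
  have hden : ((i : ℝ) + 1) * y + 1 ≠ 0 := by positivity
  have hnum : HasDerivAt (fun y : ℝ => i * y + 1) i y := by
    simpa using ((hasDerivAt_id y).const_mul (i : ℝ)).add_const 1
  have hdenom : HasDerivAt (fun y : ℝ => (i + 1) * y + 1) (i + 1) y := by
    simpa using ((hasDerivAt_id y).const_mul ((i : ℝ) + 1)).add_const 1
  refine (hnum.div hdenom hden).congr_deriv ?_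
  field_simp
  ring

lemma injOn_inverseBranch (i : ℕ) : InjOn (inverseBranch i) (Ioi 0) := by
  intro a (ha : 0 < a) b (hb : 0 < b) h
  rw [inverseBranch, inverseBranch, div_eq_div_iff (by positivity) (by positivity)] at h
  linear_combination -h

lemma setLIntegral_image_inverseBranch (i : ℕ) (h : ℝ → ℝ≥0∞) :
    ∫⁻ x in inverseBranch i '' inducedDomain, ENNReal.ofReal x⁻¹ * h x =
      ∫⁻ y in inducedDomain, ENNReal.ofReal (branchWeight i y) * h (inverseBranch i y) := by
  have hpos {y : ℝ} (hy : y ∈ inducedDomain) : 0 < y := by linarith [hy.1.1]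
  rw [lintegral_image_eq_lintegral_abs_deriv_mul measurableSet_inducedDomain
    (fun y hy => (hasDerivAt_inverseBranch i (hpos hy)).hasDerivWithinAt)
    ((injOn_inverseBranch i).mono fun y hy => hpos hy)]
  refine setLIntegral_congr_fun measurableSet_inducedDomain fun y hy => ?_
  have := hpos hy
  rw [← mul_assoc, ← ENNReal.ofReal_mul (abs_nonneg _), abs_neg, abs_of_pos (by positivity),
    inverseBranch, branchWeight, inv_div]
  congr 3
  field_simp

lemma image_inverseBranch (i : ℕ) :
    inverseBranch i '' inducedDomain = inducedDomain ∩ returnTime ⁻¹' {i + 1} := by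
  ext x
  constructor
  · rintro ⟨y, hy, rfl⟩
    exact ⟨mapsTo_inverseBranch i hy, returnTime_inverseBranch hy.1 i⟩
  · rintro ⟨hx, hφ : returnTime x = i + 1⟩
    refine ⟨inducedMap x, mapsTo_inducedMap hx, ?_⟩
    simpa [hφ] using inverseBranch_inducedMap hx

lemma lintegral_mul_comp_inducedMap (a : ℕ → ℝ≥0∞) {g : ℝ → ℝ≥0∞} (hg : Measurable g) :
    ∫⁻ x, a (returnTime x) * g (inducedMap x) ∂inducedMeasure =
      ∫⁻ y in inducedDomain, (∑' i, a (i + 1) * ENNReal.ofReal (branchWeight i y)) * g y := by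
  have hmeas (i : ℕ) : MeasurableSet (inverseBranch i '' inducedDomain) := by
    rw [image_inverseBranch]
    exact measurableSet_inducedDomain.inter (measurable_returnTime (measurableSet_singleton _))
  have hpiece (i : ℕ) :
      ∫⁻ x in inverseBranch i '' inducedDomain,
          ENNReal.ofReal x⁻¹ * (a (returnTime x) * g (inducedMap x)) =
        a (i + 1) * ∫⁻ y in inducedDomain, ENNReal.ofReal (branchWeight i y) * g y := by
    rw [setLIntegral_congr_fun (hmeas i) (g := fun x => a (i + 1) * (ENNReal.ofReal x⁻¹ *
        g (inducedMap x))) fun x hx => by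
          rw [image_inverseBranch] at hx
          rw [show returnTime x = i + 1 from hx.2, mul_left_comm],
      lintegral_const_mul _ (by fun_prop), setLIntegral_image_inverseBranch]
    congr 1
    refine setLIntegral_congr_fun measurableSet_inducedDomain fun y hy => ?_
    rw [inducedMap_inverseBranch hy.1]
  rw [lintegral_inducedMeasure, ← iUnion_image_inverseBranch,
    lintegral_iUnion hmeas pairwise_disjoint_image_inverseBranch]
  simp_rw [hpiece, iUnion_image_inverseBranch]
  have hterm (i : ℕ) : Measurable fun y => ENNReal.ofReal (branchWeight i y) * g y := by
    unfold branchWeight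
    fun_prop
  simp_rw [← lintegral_const_mul _ (hterm _)]
  rw [← lintegral_tsum fun i => ((hterm i).const_mul _).aemeasurable]
  simp_rw [← ENNReal.tsum_mul_right, mul_assoc]

lemma branchWeight_nonneg (i : ℕ) {y : ℝ} (hy : 0 ≤ y) : 0 ≤ branchWeight i y := by
  unfold branchWeight
  positivity

lemma hasSum_branchWeight {y : ℝ} (hy : 0 < y) : HasSum (branchWeight · y) y⁻¹ := by
  set f : ℕ → ℝ := fun i => (i * y + 1)⁻¹
  have hf (i : ℕ) : branchWeight i y = y⁻¹ * (f i - f (i + 1)) := by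
    simp only [branchWeight, f]
    push_cast
    field_simp
    ring
  have hsum (n : ℕ) : ∑ i ∈ Finset.range n, branchWeight i y = y⁻¹ * (1 - f n) := by
    simp only [hf, ← Finset.mul_sum, Finset.sum_range_sub']
    simp [f]
  have hlim : Tendsto f atTop (𝓝 0) :=
    tendsto_inv_atTop_zero.comp <| tendsto_atTop_add_const_right _ _ <|
      tendsto_natCast_atTop_atTop.atTop_mul_const hy
  rw [hasSum_iff_tendsto_nat_of_nonneg fun i => branchWeight_nonneg i hy.le]
  simp only [hsum]
  simpa using ((tendsto_const_nhds (x := (1 : ℝ))).sub hlim).const_mul y⁻¹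

lemma tsum_ofReal_branchWeight {y : ℝ} (hy : 0 < y) :
    ∑' i, ENNReal.ofReal (branchWeight i y) = ENNReal.ofReal y⁻¹ := by
  rw [← ENNReal.ofReal_tsum_of_nonneg (fun i => branchWeight_nonneg i hy.le)
    (hasSum_branchWeight hy).summable, (hasSum_branchWeight hy).tsum_eq]

lemma measurePreserving_inducedMap :
    MeasurePreserving inducedMap inducedMeasure inducedMeasure := by
  refine ⟨measurable_inducedMap, Measure.ext_of_lintegral _ fun g hg => ?_⟩
  have h := lintegral_mul_comp_inducedMap (fun _ => 1) hg
  simp only [one_mul] at h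
  rw [lintegral_map hg measurable_inducedMap, h, lintegral_inducedMeasure]
  refine setLIntegral_congr_fun measurableSet_inducedDomain fun y hy => ?_
  rw [tsum_ofReal_branchWeight (by linarith [hy.1.1])]

/-! ### Correlation sums as expected numbers of visits -/

/-- The `m`-th visit of `x ∈ D` to `D` happens at time `birkhoffSum inducedMap returnTime m x`. -/
noncomputable def expectedVisits (n : ℕ) : ℝ≥0∞ :=
  ∑ m ∈ Finset.range (n + 1), inducedMeasure {x | birkhoffSum inducedMap returnTime m x ≤ n}

lemma sum_fareyMeasure_eq_expectedVisits (n : ℕ) :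
    ∑ k ∈ Finset.range (n + 1), fareyMeasure (Icc (1 / 2) 1 ∩ (fareyMap^[k]) ⁻¹' Icc (1 / 2) 1) =
      expectedVisits n := by
  classical
  have hpre (k : ℕ) : MeasurableSet ((fareyMap^[k]) ⁻¹' Icc (1 / 2 : ℝ) 1) :=
    measurable_fareyMap.iterate k measurableSet_Icc
  have hterm (k : ℕ) : fareyMeasure (Icc (1 / 2) 1 ∩ (fareyMap^[k]) ⁻¹' Icc (1 / 2) 1) =
      inducedMeasure ((fareyMap^[k]) ⁻¹' Icc (1 / 2) 1) := by
    rw [inducedMeasure, Measure.restrict_apply (hpre k), inter_comm _ inducedDomain]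
    exact measure_congr (Icc_ae_eq_inducedDomain.inter (ae_eq_refl _))
  simp_rw [hterm, expectedVisits]
  rw [← lintegral_card_filter_mem _ _ hpre,
    ← lintegral_card_filter_mem (S := fun m => {x | birkhoffSum inducedMap returnTime m x ≤ n}) _ _
      fun m => measurable_inducedMap.birkhoffSum measurable_returnTime m measurableSet_Iic]
  refine lintegral_congr_ae ((ae_restrict_mem measurableSet_inducedDomain).mono fun x hx => ?_)
  simp only [mem_preimage, mem_ofPred_eq]
  exact_mod_cast isFirstReturnMap.card_visits_eq hx n

/-! ### The upper bound -/

noncomputable def laplaceGap (n : ℕ) : ℝ := log (n + 1) / (8 * n)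

lemma laplaceGap_nonneg (n : ℕ) : 0 ≤ laplaceGap n :=
  div_nonneg (log_nonneg (by simp)) (by positivity)

lemma log_div_le_laplaceGap (n : ℕ) : log n / (8 * n) ≤ laplaceGap n := by
  rcases Nat.eq_zero_or_pos n with rfl | hn
  · simp [laplaceGap]
  exact div_le_div_of_nonneg_right (log_le_log (by positivity) (by linarith)) (by positivity)

lemma laplaceGap_le_one (n : ℕ) : laplaceGap n ≤ 1 := by
  rcases Nat.eq_zero_or_pos n with rfl | hn
  · simp [laplaceGap]
  have hn' : (1 : ℝ) ≤ n := by exact_mod_cast hn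
  rw [laplaceGap, div_le_one (by positivity)]
  linarith [log_le_sub_one_of_pos (by positivity : (0 : ℝ) < n + 1)]

lemma inv_mul_le_one_sub_exp_mul_branchWeight {n i : ℕ} (hi : i < n) {y : ℝ} (hy0 : 0 ≤ y)
    (hy1 : y ≤ 1) : ((4 * n) * (i + 1) : ℝ)⁻¹ ≤ (1 - exp (-(i + 1) / n)) * branchWeight i y := by
  have hin : (i : ℝ) + 1 ≤ n := by exact_mod_cast hi
  have hexp := Real.div_two_le_one_sub_exp_neg (t := (i + 1) / n) (by positivity)
    ((div_le_one (by linarith)).2 hin)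
  have hw : ((i + 2) * (i + 1) : ℝ)⁻¹ ≤ branchWeight i y :=
    inv_anti₀ (by positivity)
      (mul_le_mul (by nlinarith) (by nlinarith) (by positivity) (by positivity))
  have hn : (0 : ℝ) < n := by linarith
  calc ((4 * n) * (i + 1) : ℝ)⁻¹ ≤ ((2 * n) * (i + 2) : ℝ)⁻¹ :=
        inv_anti₀ (by positivity) (by nlinarith)
    _ = (i + 1) / n / 2 * ((i + 2) * (i + 1) : ℝ)⁻¹ := by field_simp
    _ ≤ (1 - exp (-(i + 1) / n)) * branchWeight i y := by
        rw [neg_div]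
        gcongr
        linarith [exp_le_one_iff.2 (neg_nonpos.2 (by positivity) : -(((i : ℝ) + 1) / n) ≤ 0)]

lemma summable_mul_branchWeight {c : ℕ → ℝ} (hc0 : ∀ i, 0 ≤ c i) (hc1 : ∀ i, c i ≤ 1) {y : ℝ}
    (hy : 0 < y) : Summable fun i => c i * branchWeight i y :=
  (hasSum_branchWeight hy).summable.of_nonneg_of_le
    (fun i => mul_nonneg (hc0 i) (branchWeight_nonneg i hy.le))
    fun i => mul_le_of_le_one_left (branchWeight_nonneg i hy.le) (hc1 i)

lemma exp_neg_succ_div_le_one (n i : ℕ) : exp (-(i + 1) / n) ≤ 1 :=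
  exp_le_one_iff.2 (div_nonpos_of_nonpos_of_nonneg (by linarith) (by positivity))

lemma tsum_exp_mul_branchWeight_le {n : ℕ} (hn : 1 ≤ n) {y : ℝ} (hy : y ∈ Ioo (1 / 2) 1) :
    ∑' i : ℕ, exp (-(i + 1) / n) * branchWeight i y ≤ (1 - laplaceGap n) * y⁻¹ := by
  obtain ⟨hy1, hy2⟩ := hy
  have hy0 : 0 < y := by linarith
  have hw := hasSum_branchWeight hy0
  set e : ℕ → ℝ := fun i => exp (-(i + 1) / n)
  have he (i : ℕ) : e i ≤ 1 := exp_neg_succ_div_le_one n i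
  have hbw (i : ℕ) := branchWeight_nonneg i hy0.le
  have hsum := summable_mul_branchWeight (fun i => exp_nonneg _) he hy0
  have hsum' := summable_mul_branchWeight (c := fun i => 1 - e i) (fun i => by linarith [he i])
    (fun i => by linarith [exp_nonneg (-(i + 1) / n : ℝ)]) hy0
  have hdefect : ∑' i, (1 - e i) * branchWeight i y = y⁻¹ - ∑' i, e i * branchWeight i y := by
    simp_rw [sub_mul, one_mul]
    rw [hw.summable.tsum_sub hsum, hw.tsum_eq]
  have hlog : log (n + 1) ≤ ∑ i ∈ Finset.range n, ((i : ℝ) + 1)⁻¹ := by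
    simpa [harmonic] using log_add_one_le_harmonic n
  have hgap : 2 * laplaceGap n ≤ ∑' i, (1 - e i) * branchWeight i y :=
    calc 2 * laplaceGap n = (4 * n : ℝ)⁻¹ * log (n + 1) := by rw [laplaceGap]; ring
      _ ≤ ∑ i ∈ Finset.range n, ((4 * n) * (i + 1) : ℝ)⁻¹ := by
        simp_rw [mul_inv]
        rw [← Finset.mul_sum]
        gcongr
      _ ≤ ∑ i ∈ Finset.range n, (1 - e i) * branchWeight i y :=
        Finset.sum_le_sum fun i hi => inv_mul_le_one_sub_exp_mul_branchWeight
          (Finset.mem_range.1 hi) hy0.le hy2.le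
      _ ≤ ∑' i, (1 - e i) * branchWeight i y :=
        hsum'.sum_le_tsum _ fun i _ => by nlinarith [he i, hbw i]
  have hyinv : y⁻¹ ≤ 2 := by rw [inv_le_comm₀ hy0 two_pos]; linarith
  nlinarith [laplaceGap_nonneg n]

lemma lintegral_exp_mul_comp_inducedMap_le {n : ℕ} (hn : 1 ≤ n) {g : ℝ → ℝ≥0∞}
    (hg : Measurable g) :
    ∫⁻ x, ENNReal.ofReal (exp (-(returnTime x : ℝ) / n)) * g (inducedMap x) ∂inducedMeasure ≤
      ENNReal.ofReal (1 - laplaceGap n) * ∫⁻ x, g x ∂inducedMeasure := by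
  rw [lintegral_mul_comp_inducedMap (fun j => ENNReal.ofReal (exp (-(j : ℝ) / n))) hg,
    lintegral_inducedMeasure,
    ← lintegral_const_mul' _ _ ENNReal.ofReal_ne_top]
  refine setLIntegral_mono' measurableSet_inducedDomain fun y hy => ?_
  have hy0 : 0 < y := by linarith [hy.1.1]
  rw [← mul_assoc, ← ENNReal.ofReal_mul (by linarith [laplaceGap_le_one n])]
  gcongr
  calc ∑' i : ℕ, ENNReal.ofReal (exp (-((i + 1 : ℕ) : ℝ) / n)) * ENNReal.ofReal (branchWeight i y)
      = ENNReal.ofReal (∑' i : ℕ, exp (-(i + 1) / n) * branchWeight i y) := by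
        rw [ENNReal.ofReal_tsum_of_nonneg
          (fun i => mul_nonneg (exp_nonneg _) (branchWeight_nonneg i hy0.le))
          (summable_mul_branchWeight (fun i => exp_nonneg _) (exp_neg_succ_div_le_one n) hy0)]
        push_cast
        simp_rw [ENNReal.ofReal_mul (exp_nonneg _)]
    _ ≤ _ := ENNReal.ofReal_le_ofReal (tsum_exp_mul_branchWeight_le hn hy.1)

lemma expectedVisits_le {n : ℕ} (hn : 1 ≤ n) :
    expectedVisits n ≤ ENNReal.ofReal (exp 1 * log 2 / laplaceGap n) := by
  have hterm (m : ℕ) : inducedMeasure {x | birkhoffSum inducedMap returnTime m x ≤ n} ≤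
      ENNReal.ofReal (exp 1) *
        (ENNReal.ofReal (1 - laplaceGap n) ^ m * ENNReal.ofReal (log 2)) := by
    have h := measure_le_exp_one_mul_lintegral (μ := inducedMeasure)
      (f := fun x => ((birkhoffSum inducedMap returnTime m x : ℕ) : ℝ))
      (by have := measurable_inducedMap.birkhoffSum measurable_returnTime m; fun_prop)
      (s := n) (by positivity)
    simp only [Nat.cast_le] at h
    refine h.trans (mul_le_mul_right ?_ _)
    rw [← inducedMeasure_univ]
    exact lintegral_exp_neg_birkhoffSum_le measurable_inducedMap measurable_returnTime
      (fun g hg => lintegral_exp_mul_comp_inducedMap_le hn hg) m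
  have hgap : 0 < laplaceGap n := by
    have : (1 : ℝ) ≤ n := by exact_mod_cast hn
    exact div_pos (log_pos (by linarith)) (by positivity)
  have hρ : 1 - ENNReal.ofReal (1 - laplaceGap n) = ENNReal.ofReal (laplaceGap n) := by
    rw [← ENNReal.ofReal_one, ← ENNReal.ofReal_sub _ (by linarith [laplaceGap_le_one n]),
      sub_sub_cancel]
  calc expectedVisits n
      ≤ ∑ m ∈ Finset.range (n + 1), ENNReal.ofReal (exp 1) * ENNReal.ofReal (log 2) *
          ENNReal.ofReal (1 - laplaceGap n) ^ m :=
        Finset.sum_le_sum fun m _ => (hterm m).trans_eq (by ring)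
    _ ≤ ENNReal.ofReal (exp 1) * ENNReal.ofReal (log 2) *
          ∑' m, ENNReal.ofReal (1 - laplaceGap n) ^ m := by
        rw [← Finset.mul_sum]
        exact mul_le_mul_right (ENNReal.sum_le_tsum _) _
    _ = ENNReal.ofReal (exp 1 * log 2 / laplaceGap n) := by
        rw [ENNReal.tsum_geometric, hρ, ← ENNReal.ofReal_inv_of_pos hgap,
          ← ENNReal.ofReal_mul (exp_nonneg _), ← ENNReal.ofReal_mul (by positivity), div_eq_mul_inv]

/-! ### The lower bound -/

lemma inducedMeasure_lt_birkhoffSum_le {n : ℕ} (hn : 1 ≤ n) (m : ℕ) :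
    inducedMeasure {x | n < birkhoffSum inducedMap returnTime m x} ≤
      ENNReal.ofReal (m * log (n + 1) / n) := by
  have h := natCast_mul_measure_lt_birkhoffSum_le measurePreserving_inducedMap
    measurable_returnTime n m
  rw [lintegral_min_returnTime, ← ENNReal.ofReal_natCast m,
    ← ENNReal.ofReal_mul (by positivity)] at h
  have hn' : (0 : ℝ) < n := by exact_mod_cast hn
  rw [ENNReal.ofReal_div_of_pos hn', ENNReal.le_div_iff_mul_le (Or.inl (by simp; omega)) (by simp),
    mul_comm, ENNReal.ofReal_natCast]
  exact h

lemma half_le_inducedMeasure_birkhoffSum_le {n m : ℕ} (hn : 1 ≤ n)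
    (hm : 8 * m * log (n + 1) ≤ n) :
    ENNReal.ofReal (1 / 2) ≤ inducedMeasure {x | birkhoffSum inducedMap returnTime m x ≤ n} := by
  have hmeas : MeasurableSet {x | n < birkhoffSum inducedMap returnTime m x} :=
    measurable_inducedMap.birkhoffSum measurable_returnTime m measurableSet_Ioi
  have hcompl : {x | birkhoffSum inducedMap returnTime m x ≤ n} =
      {x | n < birkhoffSum inducedMap returnTime m x}ᶜ := by
    ext x
    simp
  have htail := inducedMeasure_lt_birkhoffSum_le hn m
  have hn' : (0 : ℝ) < n := by exact_mod_cast hn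
  have htail' : m * log (n + 1) / n ≤ 1 / 8 := by
    rw [div_le_iff₀ hn']
    linarith
  rw [hcompl, measure_compl hmeas (measure_ne_top _ _), inducedMeasure_univ]
  calc ENNReal.ofReal (1 / 2) ≤ ENNReal.ofReal (log 2) - ENNReal.ofReal (1 / 8) := by
        rw [← ENNReal.ofReal_sub _ (by norm_num)]
        exact ENNReal.ofReal_le_ofReal (by linarith [log_two_gt_d9])
    _ ≤ _ := by
      gcongr
      exact htail.trans (ENNReal.ofReal_le_ofReal htail')

lemma le_expectedVisits {n : ℕ} (hn : 2 ≤ n) :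
    ENNReal.ofReal (n / log n / 32) ≤ expectedVisits n := by
  have hnR : (2 : ℝ) ≤ n := by exact_mod_cast hn
  have hlogn : 0 < log n := log_pos (by linarith)
  have hlog : log (n + 1) ≤ 2 * log n := by
    rw [← log_rpow (by linarith)]
    exact log_le_log (by linarith) (by norm_num; nlinarith)
  have hlog1 : 1 ≤ log (n + 1) := by
    rw [le_log_iff_exp_le (by positivity)]
    linarith [exp_one_lt_d9]
  set M := ⌊n / (8 * log (n + 1))⌋₊
  have hMle : (M : ℝ) * (8 * log (n + 1)) ≤ n :=
    (le_div_iff₀ (by positivity)).1 (Nat.floor_le (by positivity))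
  have hMn : M ≤ n := by
    have : (M : ℝ) ≤ n := by nlinarith
    exact_mod_cast this
  have hMgt : n / log n / 32 ≤ (M + 1 : ℕ) * (1 / 2 : ℝ) := by
    have h := Nat.lt_floor_add_one (n / (8 * log (n + 1)))
    rw [div_lt_iff₀ (by positivity)] at h
    push_cast
    rw [div_div, div_le_iff₀ (by positivity)]
    nlinarith
  calc ENNReal.ofReal (n / log n / 32) ≤ ∑ _m ∈ Finset.range (M + 1), ENNReal.ofReal (1 / 2) := by
        rw [Finset.sum_const, Finset.card_range, nsmul_eq_mul, ← ENNReal.ofReal_natCast,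
          ← ENNReal.ofReal_mul (by positivity)]
        exact ENNReal.ofReal_le_ofReal hMgt
    _ ≤ ∑ m ∈ Finset.range (M + 1),
          inducedMeasure {x | birkhoffSum inducedMap returnTime m x ≤ n} := by
        refine Finset.sum_le_sum fun m hm => half_le_inducedMeasure_birkhoffSum_le (by omega) ?_
        have : (m : ℝ) ≤ M := by exact_mod_cast Nat.lt_succ_iff.1 (Finset.mem_range.1 hm)
        nlinarith
    _ ≤ expectedVisits n := Finset.sum_le_sum_of_subset (Finset.range_subset_range.2 (by omega))

end Farey

/-- For the Farey map with its infinite invariant measure and `D = [1/2,1]`,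
the correlation sums satisfy `∑_{k=0}^{n} μ(D ∩ F^{-k}(D)) ≍ n / log n`. -/
theorem fareyMap_correlation_sums_asymp :
    ∃ c C : ℝ, 0 < c ∧ c ≤ C ∧ ∀ n : ℕ, 2 ≤ n →
      c * ((n : ℝ) / Real.log n) ≤
        (∑ k ∈ Finset.range (n + 1),
          (fareyMeasure (Set.Icc (1 / 2 : ℝ) 1 ∩
            (fareyMap^[k]) ⁻¹' Set.Icc (1 / 2 : ℝ) 1)).toReal) ∧
      (∑ k ∈ Finset.range (n + 1),
          (fareyMeasure (Set.Icc (1 / 2 : ℝ) 1 ∩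
            (fareyMap^[k]) ⁻¹' Set.Icc (1 / 2 : ℝ) 1)).toReal) ≤
        C * ((n : ℝ) / Real.log n) := by
  refine ⟨1 / 32, 8 * exp 1 * log 2, by norm_num,
    by nlinarith [exp_one_gt_d9, log_two_gt_d9], fun n hn => ?_⟩
  have hnR : (2 : ℝ) ≤ n := by exact_mod_cast hn
  have hlogn : 0 < log n := log_pos (by linarith)
  have hsum := Farey.sum_fareyMeasure_eq_expectedVisits n
  have hfin : Farey.expectedVisits n ≠ ⊤ := ENNReal.sum_ne_top.2 fun _ _ => measure_ne_top _ _
  rw [← ENNReal.toReal_sum (ENNReal.sum_ne_top.1 (hsum ▸ hfin)), hsum]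
  constructor
  · have h := ENNReal.toReal_mono hfin (Farey.le_expectedVisits hn)
    rw [ENNReal.toReal_ofReal (by positivity)] at h
    linarith
  · calc _ ≤ exp 1 * log 2 / Farey.laplaceGap n :=
          ENNReal.toReal_le_of_le_ofReal (div_nonneg (by positivity) (Farey.laplaceGap_nonneg n))
            (Farey.expectedVisits_le (by omega))
      _ ≤ exp 1 * log 2 / (log n / (8 * n)) :=
          div_le_div_of_nonneg_left (by positivity) (by positivity) (Farey.log_div_le_laplaceGap n)
      _ = 8 * exp 1 * log 2 * (n / log n) := by field_simp
end
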